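/- arXiv:1510.02605 — 8 statements merged into one kernel-verified Lean document; each statement's English description precedes it below -/
import Mathlib

section
/- If A is skew-adjoint with respect to φ (A = −A*), then R^Λ_A(x,y,z,w) = 2R^S_A(x,y,z,w) + R^S_A(x,z,y,w) + R^S_A(x,w,z,y) for all x, y, z, w ∈ V. -/
open RealInnerProductSpace

variable {V : Type*} [NormedAddCommGroup V] [InnerProductSpace ℝ V] [FiniteDimensional ℝ V]

noncomputable def RS (A : V →ₗ[ℝ] V) (x y z w : V) : ℝ :=
  ⟪A x, w⟫ * ⟪A y, z⟫ - ⟪A x, z⟫ * ⟪A y, w⟫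

noncomputable def RL (A : V →ₗ[ℝ] V) (x y z w : V) : ℝ :=
  RS A x y z w - 2 * ⟪A x, y⟫ * ⟪A z, w⟫

theorem stmt_2 (A : V →ₗ[ℝ] V) (hA : LinearMap.adjoint A = -A) (x y z w : V) :
    RL A x y z w = 2 * RS A x y z w + RS A x z y w + RS A x w z y := by
  have skew : ∀ u v : V, ⟪A u, v⟫ = -⟪A v, u⟫ := fun u v => by
    rw [← LinearMap.adjoint_inner_right, hA, LinearMap.neg_apply, inner_neg_right,
      real_inner_comm]
  simp only [RL, RS]
  rw [skew z y, skew w z, skew w y]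
  ring
end

section
/- If B is self-adjoint with rank at least 3, A is skew-adjoint and nonzero (all with respect to a positive definite inner product φ), then R^Λ_A ≠ R^S_B and R^Λ_A ≠ −R^S_B. -/
open RealInnerProductSpace

variable {V : Type*} [NormedAddCommGroup V] [InnerProductSpace ℝ V] [FiniteDimensional ℝ V]

lemma skew_inner (A : V →ₗ[ℝ] V) (hA : LinearMap.adjoint A = -A) (x y : V) :
    ⟪A x, y⟫ = -⟪A y, x⟫ := by
  have h := congrArg (fun T : V →ₗ[ℝ] V => ⟪T y, x⟫) hA
  simp only [LinearMap.adjoint_inner_left, LinearMap.neg_apply, inner_neg_left] at h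
  rw [real_inner_comm] at h
  linarith

lemma key_lemma (A B : V →ₗ[ℝ] V) (hB : LinearMap.adjoint B = B)
    (hrankB : 3 ≤ Module.finrank ℝ (LinearMap.range B))
    (hA : LinearMap.adjoint A = -A) (ε : ℝ) (hε : ε ≠ 0)
    (h : ∀ x y z w, RL A x y z w = ε * RS B x y z w) : False := by
  classical
  have hSym : B.IsSymmetric := by
    rw [LinearMap.isSymmetric_iff_isSelfAdjoint, LinearMap.isSelfAdjoint_iff']
    exact hB
  set n := Module.finrank ℝ V with hn
  let b : OrthonormalBasis (Fin n) ℝ V := hSym.eigenvectorBasis rfl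
  let μ : Fin n → ℝ := hSym.eigenvalues rfl
  have hBb : ∀ i, B (b i) = μ i • b i := fun i => by
    have := hSym.apply_eigenvectorBasis (rfl : Module.finrank ℝ V = n) i
    simpa [μ, b] using this
  have hinner : ∀ i j, ⟪b i, b j⟫ = if i = j then 1 else 0 :=
    orthonormal_iff_ite.mp b.orthonormal
  -- the set of indices with nonzero eigenvalue has at least 3 elements
  set S : Finset (Fin n) := Finset.univ.filter (fun i => μ i ≠ 0) with hS
  have hcard : 3 ≤ S.card := by
    by_contra hc
    push_neg at hc
    have hsub : LinearMap.range B ≤ Submodule.span ℝ (↑(S.image b) : Set V) := by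
      rintro x ⟨y, rfl⟩
      have hy : y = ∑ i, b.repr y i • b i := by
        simpa using (b.sum_repr y).symm
      rw [hy]
      simp only [map_sum, map_smul]
      apply Submodule.sum_mem
      intro i _
      rw [hBb i]
      by_cases hμ : μ i = 0
      · simp [hμ]
      · apply Submodule.smul_mem
        apply Submodule.smul_mem
        apply Submodule.subset_span
        simp only [Finset.coe_image, Set.mem_image, Finset.mem_coe]
        exact ⟨i, by simp [hS, hμ], rfl⟩
    have h1 : Module.finrank ℝ (LinearMap.range B) ≤
        Module.finrank ℝ (Submodule.span ℝ (↑(S.image b) : Set V)) :=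
      Submodule.finrank_mono hsub
    have h2 : Module.finrank ℝ (Submodule.span ℝ (↑(S.image b) : Set V)) ≤ (S.image b).card :=
      finrank_span_finset_le_card _
    have h3 : (S.image b).card ≤ S.card := Finset.card_image_le
    omega
  -- extract three distinct indices with nonzero eigenvalues
  obtain ⟨i, hiS⟩ := Finset.card_pos.mp (by omega : 0 < S.card)
  have hci : 0 < (S.erase i).card := by
    have := Finset.card_erase_of_mem hiS; omega
  obtain ⟨j, hjS⟩ := Finset.card_pos.mp hci
  have hji : j ≠ i := Finset.ne_of_mem_erase hjS
  have hjS' : j ∈ S := Finset.mem_of_mem_erase hjS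
  have hcj : 0 < ((S.erase i).erase j).card := by
    have h1 := Finset.card_erase_of_mem hiS
    have h2 := Finset.card_erase_of_mem hjS
    omega
  obtain ⟨k, hkS⟩ := Finset.card_pos.mp hcj
  have hkj : k ≠ j := Finset.ne_of_mem_erase hkS
  have hki : k ≠ i := Finset.ne_of_mem_erase (Finset.mem_of_mem_erase hkS)
  have hkS' : k ∈ S := Finset.mem_of_mem_erase (Finset.mem_of_mem_erase hkS)
  have hμi : μ i ≠ 0 := (Finset.mem_filter.mp hiS).2
  have hμj : μ j ≠ 0 := (Finset.mem_filter.mp hjS').2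
  have hμk : μ k ≠ 0 := (Finset.mem_filter.mp hkS').2
  -- basic inner product facts
  have hBij : ∀ p q : Fin n, ⟪B (b p), b q⟫ = μ p * (if p = q then 1 else 0) := by
    intro p q
    rw [hBb p, real_inner_smul_left, hinner]
  have hAskew : ∀ x y : V, ⟪A x, y⟫ = -⟪A y, x⟫ := skew_inner A hA
  have hAxx : ∀ x : V, ⟪A x, x⟫ = 0 := fun x => by
    have := hAskew x x; linarith
  -- identity (1): for i ≠ j, 3 * a_{ij}^2 = ε * μ i * μ j
  have key1 : ∀ p q : Fin n, p ≠ q →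
      3 * (⟪A (b p), b q⟫ * ⟪A (b p), b q⟫) = ε * (μ p * μ q) := by
    intro p q hpq
    have h1 := h (b p) (b q) (b p) (b q)
    simp only [RL, RS] at h1
    rw [hAskew (b q) (b p), hAxx (b p), hAxx (b q), hBij p q, hBij q p, hBij p p,
      hBij q q] at h1
    simp only [if_neg hpq, if_neg (Ne.symm hpq), if_pos rfl, if_true, mul_zero, zero_mul, mul_one] at h1
    nlinarith [h1]
  -- identity (2): for distinct p q r, a_{pq} * a_{pr} = 0
  have key2 : ∀ p q r : Fin n, p ≠ q → p ≠ r → q ≠ r →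
      ⟪A (b p), b q⟫ * ⟪A (b p), b r⟫ = 0 := by
    intro p q r hpq hpr hqr
    have h2 := h (b p) (b q) (b p) (b r)
    simp only [RL, RS] at h2
    rw [hAskew (b q) (b p), hAxx (b p), hBij p r, hBij q p, hBij p p, hBij q r] at h2
    simp only [if_neg hpr, if_neg (Ne.symm hpq), if_neg hqr, if_pos rfl, mul_zero,
      zero_mul, mul_one, if_true] at h2
    nlinarith [h2]
  -- derive contradiction
  have h12 := key1 i j (Ne.symm hji)
  have h13 := key1 i k (Ne.symm hki)
  have h23 := key2 i j k (Ne.symm hji) (Ne.symm hki) (Ne.symm hkj)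
  rcases mul_eq_zero.mp h23 with hz | hz
  · rw [hz] at h12
    have : ε * (μ i * μ j) = 0 := by linarith
    rcases mul_eq_zero.mp this with h' | h'
    · exact hε h'
    · rcases mul_eq_zero.mp h' with h'' | h''
      · exact hμi h''
      · exact hμj h''
  · rw [hz] at h13
    have : ε * (μ i * μ k) = 0 := by linarith
    rcases mul_eq_zero.mp this with h' | h'
    · exact hε h'
    · rcases mul_eq_zero.mp h' with h'' | h''
      · exact hμi h''
      · exact hμk h''

theorem stmt_5 (A B : V →ₗ[ℝ] V) (hB : LinearMap.adjoint B = B)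
    (hrankB : 3 ≤ Module.finrank ℝ (LinearMap.range B))
    (hA : LinearMap.adjoint A = -A) (hA0 : A ≠ 0) :
    (¬ ∀ x y z w, RL A x y z w = RS B x y z w) ∧
    (¬ ∀ x y z w, RL A x y z w = -RS B x y z w) := by
  constructor
  · intro h
    exact key_lemma A B hB hrankB hA 1 one_ne_zero
      (fun x y z w => by rw [h x y z w]; ring)
  · intro h
    exact key_lemma A B hB hrankB hA (-1) (by norm_num)
      (fun x y z w => by rw [h x y z w]; ring)
end

section
/- Let C and D be skew-adjoint with respect to a positive definite inner product φ on V with dim V ≥ 3. If {C, D, I} is linearly independent, then {R^S_I, R^Λ_C, R^Λ_D} is linearly independent. -/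
open RealInnerProductSpace

variable {V : Type*} [NormedAddCommGroup V] [InnerProductSpace ℝ V] [FiniteDimensional ℝ V]

lemma aux_orth_exists (S : Submodule ℝ V) (h : Module.finrank ℝ S < Module.finrank ℝ V) :
    ∃ y : V, y ≠ 0 ∧ y ∈ Sᗮ := by
  have h1 := Submodule.finrank_add_finrank_orthogonal S
  have h2 : Sᗮ ≠ ⊥ := by
    intro hbot
    rw [hbot, finrank_bot] at h1; omega
  obtain ⟨y, hy, hy0⟩ := Submodule.exists_mem_ne_zero_of_ne_bot h2
  exact ⟨y, hy0, hy⟩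

lemma aux_span_le (k : ℕ) (f : Fin k → V) :
    Module.finrank ℝ (Submodule.span ℝ (Set.range f)) ≤ k := by
  have := finrank_range_le_card (R := ℝ) f
  simpa [Set.finrank] using this

lemma aux_skew (C : V →ₗ[ℝ] V) (hC : LinearMap.adjoint C = -C) (u v : V) :
    ⟪C u, v⟫ = -⟪C v, u⟫ := by
  have h1 := LinearMap.adjoint_inner_left C v u
  rw [hC] at h1
  simp only [LinearMap.neg_apply, inner_neg_left] at h1
  have h2 : ⟪C v, u⟫ = ⟪u, C v⟫ := real_inner_comm _ _
  linarith

lemma aux_ker (C : V →ₗ[ℝ] V) (hC : LinearMap.adjoint C = -C)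
    (h3 : Module.finrank ℝ V = 3) : ∃ x : V, x ≠ 0 ∧ C x = 0 := by
  have hdet : LinearMap.det C = 0 := by
    let v := stdOrthonormalBasis ℝ V
    have h1 : LinearMap.det C = Matrix.det (LinearMap.toMatrix v.toBasis v.toBasis C) :=
      (LinearMap.det_toMatrix _ _).symm
    have h2 := LinearMap.toMatrix_adjoint v v C
    rw [hC, map_neg] at h2
    have h4 := congrArg Matrix.det h2
    rw [Matrix.det_neg, Matrix.det_conjTranspose] at h4
    simp only [Fintype.card_fin, h3, star_trivial] at h4
    have h5 : (-1 : ℝ) ^ 3 = -1 := by norm_num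
    rw [h5] at h4
    rw [h1]
    linarith
  have hker := LinearMap.bot_lt_ker_of_det_eq_zero hdet
  obtain ⟨x, hx, hx0⟩ := Submodule.exists_mem_ne_zero_of_ne_bot (bot_lt_iff_ne_bot.mp hker)
  exact ⟨x, hx0, LinearMap.mem_ker.mp hx⟩

theorem stmt_8 (C D : V →ₗ[ℝ] V) (hC : LinearMap.adjoint C = -C)
    (hD : LinearMap.adjoint D = -D) (hdim : 3 ≤ Module.finrank ℝ V)
    (hli : ∀ a b c : ℝ, a • C + b • D + c • (LinearMap.id : V →ₗ[ℝ] V) = 0 →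
      a = 0 ∧ b = 0 ∧ c = 0) :
    ∀ a b c : ℝ,
      (∀ x y z w : V,
        a * RS (LinearMap.id : V →ₗ[ℝ] V) x y z w + b * RL C x y z w + c * RL D x y z w = 0) →
      a = 0 ∧ b = 0 ∧ c = 0 := by
  intro a b c h
  have hCs := aux_skew C hC
  have hDs := aux_skew D hD
  have hC0 : ∀ u : V, ⟪C u, u⟫ = 0 := fun u => by have := hCs u u; linarith
  have hD0 : ∀ u : V, ⟪D u, u⟫ = 0 := fun u => by have := hDs u u; linarith
  -- Key contracted identity
  have K : ∀ x y z : V,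
      a * (⟪x, x⟫ * ⟪y, z⟫ - ⟪x, z⟫ * ⟪x, y⟫)
        + 3 * b * (⟪C x, y⟫ * ⟪C x, z⟫) + 3 * c * (⟪D x, y⟫ * ⟪D x, z⟫) = 0 := by
    intro x y z
    have h1 := h x y z x
    simp only [RS, RL, LinearMap.id_coe, id_eq] at h1
    rw [hCs y x, hCs z x, hDs y x, hDs z x, hC0 x, hD0 x, real_inner_comm x y] at h1
    linear_combination h1
  -- Step A : a = 0
  have ha : a = 0 := by
    obtain ⟨x, y, hx, hy, hxy, hCxy, hDxy⟩ :
        ∃ x y : V, x ≠ 0 ∧ y ≠ 0 ∧ ⟪x, y⟫ = 0 ∧ ⟪C x, y⟫ = 0 ∧ ⟪D x, y⟫ = 0 := by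
      by_cases h4 : 4 ≤ Module.finrank ℝ V
      · have : Nontrivial V := Module.nontrivial_of_finrank_pos (R := ℝ) (by omega)
        obtain ⟨x, hx⟩ := exists_ne (0 : V)
        set S := Submodule.span ℝ (Set.range ![x, C x, D x]) with hS
        have hle : Module.finrank ℝ S ≤ 3 := aux_span_le 3 _
        obtain ⟨y, hy, hyS⟩ := aux_orth_exists S (by omega)
        have hmem : ∀ i : Fin 3, (![x, C x, D x] i) ∈ S :=
          fun i => Submodule.subset_span (Set.mem_range_self i)
        refine ⟨x, y, hx, hy, ?_, ?_, ?_⟩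
        · have := (Submodule.mem_orthogonal S y).mp hyS x (hmem 0)
          exact this
        · have := (Submodule.mem_orthogonal S y).mp hyS (C x) (hmem 1)
          exact this
        · exact (Submodule.mem_orthogonal S y).mp hyS (D x) (hmem 2)
      · have h3 : Module.finrank ℝ V = 3 := by omega
        obtain ⟨x, hx, hCx⟩ := aux_ker C hC h3
        set S := Submodule.span ℝ (Set.range ![x, D x]) with hS
        have hle : Module.finrank ℝ S ≤ 2 := aux_span_le 2 _
        obtain ⟨y, hy, hyS⟩ := aux_orth_exists S (by omega)
        have hmem : ∀ i : Fin 2, (![x, D x] i) ∈ S :=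
          fun i => Submodule.subset_span (Set.mem_range_self i)
        refine ⟨x, y, hx, hy, ?_, ?_, ?_⟩
        · have := (Submodule.mem_orthogonal S y).mp hyS x (hmem 0)
          exact this
        · rw [hCx, inner_zero_left]
        · exact (Submodule.mem_orthogonal S y).mp hyS (D x) (hmem 1)
    have h2 := K x y y
    rw [hxy, hCxy, hDxy] at h2
    have h5 : a * (⟪x, x⟫ * ⟪y, y⟫) = 0 := by linear_combination h2
    rcases mul_eq_zero.mp h5 with h6 | h6
    · exact h6
    · rcases mul_eq_zero.mp h6 with h7 | h7
      · exact absurd ((inner_self_eq_zero (𝕜 := ℝ)).mp h7) hx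
      · exact absurd ((inner_self_eq_zero (𝕜 := ℝ)).mp h7) hy
  subst ha
  -- K simplifies
  have K0 : ∀ x y z : V,
      b * (⟪C x, y⟫ * ⟪C x, z⟫) + c * (⟪D x, y⟫ * ⟪D x, z⟫) = 0 := by
    intro x y z
    have := K x y z
    linear_combination this / 3
  have hCne : C ≠ 0 := by
    intro h0
    have := (hli 1 0 0 (by rw [h0]; simp)).1
    norm_num at this
  have hDne : D ≠ 0 := by
    intro h0
    have := (hli 0 1 0 (by rw [h0]; simp)).2.1
    norm_num at this
  have vanish : ∀ (T : V →ₗ[ℝ] V), (∀ x : V, ⟪T x, T x⟫ = (0:ℝ)) → T = 0 := by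
    intro T hT
    ext x
    exact (inner_self_eq_zero (𝕜 := ℝ)).mp (hT x)
  by_cases hb : b = 0
  · subst hb
    refine ⟨rfl, rfl, ?_⟩
    by_contra hc
    apply hDne
    apply vanish
    intro x
    have := K0 x (D x) (D x)
    have h5 : c * (⟪D x, D x⟫ * ⟪D x, D x⟫) = 0 := by linear_combination this
    rcases mul_eq_zero.mp h5 with h6 | h6
    · exact absurd h6 hc
    · exact pow_eq_zero_iff (n := 2) (by norm_num) |>.mp (by linear_combination h6)
  · exfalso
    by_cases hc : c = 0
    · subst hc
      apply hCne
      apply vanish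
      intro x
      have := K0 x (C x) (C x)
      have h5 : b * (⟪C x, C x⟫ * ⟪C x, C x⟫) = 0 := by linear_combination this
      rcases mul_eq_zero.mp h5 with h6 | h6
      · exact absurd h6 hb
      · exact pow_eq_zero_iff (n := 2) (by norm_num) |>.mp (by linear_combination h6)
    · -- both b and c nonzero
      obtain ⟨x₀, hx₀⟩ : ∃ x : V, C x ≠ 0 := by
        by_contra hall
        push_neg at hall
        exact hCne (by ext x; simpa using hall x)
      set y₀ := C x₀ with hy₀
      set γ : ℝ := ⟪C x₀, y₀⟫ with hγdef
      set δ : ℝ := ⟪D x₀, y₀⟫ with hδdef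
      have hγ : γ ≠ 0 := by
        rw [hγdef, hy₀]
        exact fun h0 => hx₀ ((inner_self_eq_zero (𝕜 := ℝ)).mp h0)
      have hbc : b * γ ^ 2 + c * δ ^ 2 = 0 := by
        have := K0 x₀ y₀ y₀
        linear_combination this
      have hδ : δ ≠ 0 := by
        intro h0
        rw [h0] at hbc
        have : b * γ ^ 2 = 0 := by linarith
        rcases mul_eq_zero.mp this with h6 | h6
        · exact hb h6
        · exact hγ (pow_eq_zero_iff (n := 2) (by norm_num) |>.mp h6)
      have F : ∀ x w y z : V,
          b * (⟪C x, y⟫ * ⟪C w, z⟫ + ⟪C w, y⟫ * ⟪C x, z⟫)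
            + c * (⟪D x, y⟫ * ⟪D w, z⟫ + ⟪D w, y⟫ * ⟪D x, z⟫) = 0 := by
        intro x w y z
        have h1 := K0 (x + w) y z
        simp only [map_add, inner_add_left] at h1
        linear_combination h1 - K0 x y z - K0 w y z
      have huv : ∀ x : V, ⟪D x, y₀⟫ * γ = ⟪C x, y₀⟫ * δ := by
        intro x
        have h1 := F x x₀ y₀ y₀
        have h2 : c * δ * (⟪D x, y₀⟫ * γ - ⟪C x, y₀⟫ * δ) = 0 := by
          linear_combination (γ / 2) * h1 - ⟪C x, y₀⟫ * hbc
        rcases mul_eq_zero.mp h2 with h6 | h6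
        · exact absurd h6 (mul_ne_zero hc hδ)
        · linarith
      have hpq : ∀ y : V, ⟪D x₀, y⟫ * γ = ⟪C x₀, y⟫ * δ := by
        intro y
        have h1 := K0 x₀ y y₀
        have h2 : c * δ * (⟪D x₀, y⟫ * γ - ⟪C x₀, y⟫ * δ) = 0 := by
          linear_combination γ * h1 - ⟪C x₀, y⟫ * hbc
        rcases mul_eq_zero.mp h2 with h6 | h6
        · exact absurd h6 (mul_ne_zero hc hδ)
        · linarith
      have main : ∀ x y : V, ⟪D x, y⟫ * γ = ⟪C x, y⟫ * δ := by
        intro x y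
        have h1 := F x x₀ y y₀
        have h2 : c * δ * γ * (⟪D x, y⟫ * γ - ⟪C x, y⟫ * δ) = 0 := by
          linear_combination γ ^ 2 * h1
            - (⟪C x, y⟫ * γ + ⟪C x₀, y⟫ * ⟪C x, y₀⟫) * hbc
            - c * γ * ⟪D x, y₀⟫ * hpq y - c * ⟪C x₀, y⟫ * δ * huv x
        rcases mul_eq_zero.mp h2 with h6 | h6
        · exact absurd h6 (mul_ne_zero (mul_ne_zero hc hδ) hγ)
        · linarith
      have hmap : γ • D - δ • C = 0 := by
        ext x
        simp only [LinearMap.sub_apply, LinearMap.smul_apply, LinearMap.zero_apply]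
        have hz : ∀ y : V, ⟪γ • D x - δ • C x, y⟫ = (0:ℝ) := by
          intro y
          rw [inner_sub_left, real_inner_smul_left, real_inner_smul_left]
          have := main x y
          linarith
        exact (inner_self_eq_zero (𝕜 := ℝ)).mp (hz _)
      have := (hli (-δ) γ 0 (by
        rw [zero_smul, add_zero, neg_smul, neg_add_eq_sub]
        exact hmap)).2.1
      exact hγ this
end

section
/- Let A, B, C be linear endomorphisms of V, each either self-adjoint or skew-adjoint, forming a chain complex (BA = 0 and CB = 0). Suppose R_A + εR_B + δR_C = 0 where ε, δ ∈ {−1, 1} and each R_X denotes the canonical build (symmetric build R^S_X if X is self-adjoint, anti-symmetric build R^Λ_X if X is skew-adjoint). Then R_B = 0; in particular {A, B, C} is linearly dependent in the sense that the combination collapses to R_A + δR_C = 0. -/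
open RealInnerProductSpace

variable {V : Type*} [NormedAddCommGroup V] [InnerProductSpace ℝ V] [FiniteDimensional ℝ V]

def IsACT (R : V → V → V → V → ℝ) : Prop :=
  (∀ x y z w, R x y z w = -R y x z w) ∧
  (∀ x y z w, R x y z w = R z w x y) ∧
  (∀ x y z w, R x y z w + R z x y w + R y z x w = 0)

open Classical in
noncomputable def Rcanon (A : V →ₗ[ℝ] V) : V → V → V → V → ℝ :=
  if LinearMap.adjoint A = A then RS A else RL A

/-- Moving a (self- or skew-adjoint up to sign) map across a real inner product. -/
lemma move_adj (B : V →ₗ[ℝ] V) (u v : V) :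
    ⟪B u, v⟫ = ⟪u, LinearMap.adjoint B v⟫ := by
  rw [LinearMap.adjoint_inner_right]

/-- If `RS (B³) = 0` for self-adjoint `B`, then the range of `B` is contained in a line. -/
lemma rank_aux (B : V →ₗ[ℝ] V) (hsa : LinearMap.adjoint B = B)
    (H : ∀ x y z w : V, ⟪B (B (B x)), w⟫ * ⟪B (B (B y)), z⟫
      - ⟪B (B (B x)), z⟫ * ⟪B (B (B y)), w⟫ = 0) :
    ∃ v : V, ∀ x : V, ∃ c : ℝ, B x = c • v := by
  set T : V →ₗ[ℝ] V := B ∘ₗ B ∘ₗ B with hT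
  have hTapp : ∀ x, T x = B (B (B x)) := fun x => rfl
  have move : ∀ u v : V, ⟪B u, v⟫ = ⟪u, B v⟫ := by
    intro u v; rw [move_adj, hsa]
  -- any two values of T are parallel
  have par : ∀ x y : V, ⟪T y, T y⟫ • T x = ⟪T x, T y⟫ • T y := by
    intro x y
    apply ext_inner_right (𝕜 := ℝ)
    intro w
    have := H x y (T y) w
    rw [← hTapp, ← hTapp] at this
    rw [real_inner_smul_left, real_inner_smul_left]
    have comm : ⟪T y, T y⟫ = ⟪T y, T y⟫ := rfl
    nlinarith [this, real_inner_comm (T y) (T x)]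
  -- kernel of T equals kernel of B
  have hker : ∀ u : V, T u = 0 → B u = 0 := by
    intro u hu
    have h2 : B (B u) = 0 := by
      have : ⟪B (B (B u)), B u⟫ = 0 := by rw [← hTapp, hu, inner_zero_left]
      rw [move (B (B u)) (B u)] at this
      exact inner_self_eq_zero.mp this
    have : ⟪B (B u), u⟫ = 0 := by rw [h2, inner_zero_left]
    rw [move (B u) u] at this
    exact inner_self_eq_zero.mp this
  by_cases hT0 : T = 0
  · exact ⟨0, fun x => ⟨0, by rw [zero_smul]; exact hker x (by rw [hT0]; rfl)⟩⟩
  · obtain ⟨x₀, hx₀⟩ : ∃ x₀, T x₀ ≠ 0 := by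
      by_contra h
      push_neg at h
      exact hT0 (LinearMap.ext fun x => h x)
    -- range T ≤ span of T x₀
    have hspanT : ∀ x, ∃ c : ℝ, T x = c • T x₀ := by
      intro x
      have h := par x x₀
      have hpos : ⟪T x₀, T x₀⟫ ≠ 0 := fun h0 => hx₀ (inner_self_eq_zero.mp h0)
      refine ⟨⟪T x, T x₀⟫ / ⟪T x₀, T x₀⟫, ?_⟩
      rw [div_eq_inv_mul, ← smul_smul, ← h, smul_smul, inv_mul_cancel₀ hpos, one_smul]
    -- finrank chase
    have hrangeT : LinearMap.range T ≤ Submodule.span ℝ {T x₀} := by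
      rintro y ⟨x, rfl⟩
      obtain ⟨c, hc⟩ := hspanT x
      rw [hc]
      exact Submodule.smul_mem _ _ (Submodule.mem_span_singleton_self _)
    have hfr : Module.finrank ℝ (LinearMap.range T) ≤ 1 := by
      calc Module.finrank ℝ (LinearMap.range T)
          ≤ Module.finrank ℝ (Submodule.span ℝ {T x₀}) := Submodule.finrank_mono hrangeT
        _ = 1 := finrank_span_singleton hx₀
    have hkereq : LinearMap.ker T = LinearMap.ker B := by
      apply le_antisymm
      · intro u hu; exact hker u hu
      · intro u hu
        have hu' : B u = 0 := hu
        show T u = 0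
        rw [hTapp, hu', map_zero, map_zero]
    have e1 := LinearMap.finrank_range_add_finrank_ker T
    have e2 := LinearMap.finrank_range_add_finrank_ker B
    rw [hkereq] at e1
    have hfrB : Module.finrank ℝ (LinearMap.range B) ≤ 1 := by omega
    obtain ⟨v, hv⟩ := finrank_le_one_iff.mp hfrB
    refine ⟨(v : V), fun x => ?_⟩
    obtain ⟨c, hc⟩ := hv ⟨B x, LinearMap.mem_range_self B x⟩
    exact ⟨c, by simpa using congrArg Subtype.val hc.symm⟩

theorem stmt_12 (A B C : V →ₗ[ℝ] V)
    (hA : LinearMap.adjoint A = A ∨ LinearMap.adjoint A = -A)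
    (hB : LinearMap.adjoint B = B ∨ LinearMap.adjoint B = -B)
    (hC : LinearMap.adjoint C = C ∨ LinearMap.adjoint C = -C)
    (hBA : B ∘ₗ A = 0) (hCB : C ∘ₗ B = 0)
    (ε δ : ℝ) (hε : ε = 1 ∨ ε = -1) (hδ : δ = 1 ∨ δ = -1)
    (hsum : ∀ x y z w : V,
      Rcanon A x y z w + ε * Rcanon B x y z w + δ * Rcanon C x y z w = 0) :
    (∀ x y z w : V, Rcanon B x y z w = 0) ∧
    (∀ x y z w : V, Rcanon A x y z w + δ * Rcanon C x y z w = 0) := by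
  have hε0 : ε ≠ 0 := by rcases hε with h | h <;> rw [h] <;> norm_num
  -- inner products of A-on-B-images against B-images vanish
  have keyA : ∀ u v : V, ⟪A (B u), B v⟫ = 0 := by
    intro u v
    rw [← LinearMap.adjoint_inner_left B v (A (B u))]
    have hz : B (A (B u)) = 0 := by
      have := LinearMap.ext_iff.mp hBA (B u)
      simpa using this
    rcases hB with h | h
    · rw [h, hz, inner_zero_left]
    · rw [h]
      simp [hz]
  have keyC : ∀ u v : V, ⟪C (B u), v⟫ = 0 := by
    intro u v
    have hz : C (B u) = 0 := by
      have := LinearMap.ext_iff.mp hCB u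
      simpa using this
    rw [hz, inner_zero_left]
  have hAzero : ∀ x y z w : V, Rcanon A (B x) (B y) (B z) (B w) = 0 := by
    intro x y z w
    unfold Rcanon
    split <;> simp [RS, RL, keyA]
  have hCzero : ∀ x y z w : V, Rcanon C (B x) (B y) (B z) (B w) = 0 := by
    intro x y z w
    unfold Rcanon
    split <;> simp [RS, RL, keyC]
  have hRB : ∀ x y z w : V, Rcanon B (B x) (B y) (B z) (B w) = 0 := by
    intro x y z w
    have h := hsum (B x) (B y) (B z) (B w)
    rw [hAzero, hCzero] at h
    have : ε * Rcanon B (B x) (B y) (B z) (B w) = 0 := by linarith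
    exact (mul_eq_zero.mp this).resolve_left hε0
  have main : ∀ x y z w : V, Rcanon B x y z w = 0 := by
    by_cases hsa : LinearMap.adjoint B = B
    · -- self-adjoint case
      have move : ∀ u v : V, ⟪B u, v⟫ = ⟪u, B v⟫ := by
        intro u v; rw [move_adj, hsa]
      have hRS : ∀ x y z w : V, RS B (B x) (B y) (B z) (B w) = 0 := by
        intro x y z w
        have := hRB x y z w
        rwa [Rcanon, if_pos hsa] at this
      have H : ∀ x y z w : V, ⟪B (B (B x)), w⟫ * ⟪B (B (B y)), z⟫
          - ⟪B (B (B x)), z⟫ * ⟪B (B (B y)), w⟫ = 0 := by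
        intro x y z w
        have h := hRS x y z w
        rw [RS] at h
        rw [move (B (B x)) w, move (B (B y)) z, move (B (B x)) z, move (B (B y)) w]
        exact h
      obtain ⟨v, hv⟩ := rank_aux B hsa H
      intro x y z w
      obtain ⟨c, hc⟩ := hv x
      obtain ⟨d, hd⟩ := hv y
      rw [Rcanon, if_pos hsa, RS, hc, hd]
      simp [real_inner_smul_left]
      ring
    · -- skew case: derive B = 0, contradiction with hsa
      exfalso
      have hsk : LinearMap.adjoint B = -B := hB.resolve_left hsa
      have move : ∀ u v : V, ⟪B u, v⟫ = -⟪u, B v⟫ := by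
        intro u v
        rw [move_adj, hsk]
        simp
      have hskew0 : ∀ u : V, ⟪B u, u⟫ = 0 := by
        intro u
        have h1 := move u u
        have h2 := real_inner_comm (B u) u
        linarith
      have hB3 : ∀ x y : V, ⟪B (B (B x)), y⟫ = 0 := by
        intro x y
        have h := hRB x y x y
        rw [Rcanon, if_neg hsa, RL, RS] at h
        have e1 : ⟪B (B y), B x⟫ = -⟪B (B x), B y⟫ := by
          have h1 := move (B x) (B y)
          have h2 := real_inner_comm (B (B y)) (B x)
          linarith
        have e2 : ⟪B (B x), B x⟫ = 0 := hskew0 (B x)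
        have e3 : ⟪B (B y), B y⟫ = 0 := hskew0 (B y)
        rw [e1, e2, e3] at h
        have hz : ⟪B (B x), B y⟫ = 0 := by
          have h2 : ⟪B (B x), B y⟫ * ⟪B (B x), B y⟫ = 0 := by nlinarith
          exact mul_self_eq_zero.mp h2
        rw [move (B (B x)) y, hz, neg_zero]
      have hB0 : B = 0 := by
        ext u
        have h3 : B (B (B u)) = 0 :=
          ext_inner_right (𝕜 := ℝ) (fun v => by rw [hB3 u v, inner_zero_left])
        have h2 : B (B u) = 0 := by
          have : ⟪B (B (B u)), B u⟫ = 0 := by rw [h3, inner_zero_left]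
          rw [move (B (B u)) (B u)] at this
          have : ⟪B (B u), B (B u)⟫ = 0 := by linarith
          exact inner_self_eq_zero.mp this
        have : ⟪B (B u), u⟫ = 0 := by rw [h2, inner_zero_left]
        rw [move (B u) u] at this
        have : ⟪B u, B u⟫ = 0 := by linarith
        simpa using inner_self_eq_zero.mp this
      apply hsa
      rw [hB0]
      simp
  refine ⟨main, fun x y z w => ?_⟩
  have h := hsum x y z w
  rw [main x y z w, mul_zero, add_zero] at h
  exact h
end

section
/- Let A, B, C be linear endomorphisms of V with BA = 0, CB = 0, each self-adjoint or skew-adjoint, rank(A) ≥ 4 and rank(C) ≥ 4, and suppose R_A + εR_B + δR_C = 0 with ε, δ ∈ {−1,1}, using canonical builds. Then δ = −1 and C = A or C = −A. If moreover the chain complex is exact (Im A = ker B and Im B = ker C) and B is skew-adjoint, then A and C are invertible. -/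
open RealInnerProductSpace

variable {V : Type*} [NormedAddCommGroup V] [InnerProductSpace ℝ V] [FiniteDimensional ℝ V]

/-!
Because `B` is self- or skew-adjoint, `BA = 0` and `CB = 0` put the ranges of `A`, `C` and of their
adjoints inside `ker B`, so pulling the identity back along the orthogonal projection onto `ker B`
kills `R_B` and leaves `R_A = -δ R_C`. If both builds are symmetric, testing against vectors
orthogonal to `A x` and `C x` shows `C x ∈ ℝ A x` (otherwise `rank C ≤ 2`); if both are
antisymmetric, putting `x` in the third slot gives the same. Hence `C = μ A`, and
`R_A = -δ μ² R_A` forces `δ = -1`, `μ = ±1`. In the mixed case, putting `x` with `⟪A x, x⟫ ≠ 0`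
in the third slot puts the range of the symmetric operator `A` in `span {A x, C x}`. Finally a
skew `B` with `R_B = 0` has `⟪B x, y⟫² = 0`, so `B = 0`, and exactness makes `A` onto and `C`
one-to-one.
-/

theorem finrank_range_le_card_of_forall_mem_span {K M N : Type*} [DivisionRing K]
    [AddCommGroup M] [Module K M] [AddCommGroup N] [Module K N] (A : M →ₗ[K] N) (s : Finset N)
    (h : ∀ x, A x ∈ Submodule.span K (s : Set N)) :
    Module.finrank K (LinearMap.range A) ≤ s.card :=
  (Submodule.finrank_mono (by rintro _ ⟨x, rfl⟩; exact h x)).trans (finrank_span_finset_le_card s)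

theorem LinearMap.exists_eq_smul_of_forall_exists_smul {K M N : Type*} [Field K]
    [AddCommGroup M] [Module K M] [AddCommGroup N] [Module K N] {A C : M →ₗ[K] N}
    (h : ∀ x, ∃ c : K, C x = c • A x) : ∃ μ : K, C = μ • A := by
  have hker : ∀ x, A x = 0 → C x = 0 := fun x hx => by
    obtain ⟨c, hc⟩ := h x
    rw [hc, hx, smul_zero]
  by_cases hA : A = 0
  · exact ⟨0, LinearMap.ext fun x => by simp [hker x (by simp [hA])]⟩
  obtain ⟨x₀, hx₀⟩ : ∃ x₀, A x₀ ≠ 0 := by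
    by_contra! h0
    exact hA (LinearMap.ext h0)
  obtain ⟨μ, hμ⟩ := h x₀
  refine ⟨μ, LinearMap.ext fun x => ?_⟩
  by_cases hdep : ∃ t : K, t • A x₀ = A x
  · obtain ⟨t, ht⟩ := hdep
    have hCx : C x = t • C x₀ := by
      rw [← sub_eq_zero, ← map_smul, ← map_sub]
      exact hker _ (by rw [map_sub, map_smul, ht, sub_self])
    rw [LinearMap.smul_apply, hCx, hμ, ← ht, smul_comm]
  · have hli := (LinearIndependent.pair_iff' hx₀).mpr (not_exists.mp hdep)
    obtain ⟨c, hc⟩ := h x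
    obtain ⟨d, hd⟩ := h (x₀ + x)
    have hrel : (d - μ) • A x₀ + (d - c) • A x = 0 := by
      rw [map_add, hμ, hc, map_add] at hd
      linear_combination (norm := module) hd.symm
    obtain ⟨hdμ, hdc⟩ := LinearIndependent.pair_iff.mp hli _ _ hrel
    rw [LinearMap.smul_apply, hc, ← sub_eq_zero.mp hdμ, sub_eq_zero.mp hdc]

theorem eq_or_eq_neg_of_eq_smul {M : Type*} [AddCommGroup M] [Module ℝ M] {a c : M}
    {θ μ r : ℝ} (hθ : θ = 1 ∨ θ = -1) (hc : c = μ • a) (hr : r ≠ 0)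
    (h : r = θ * (μ ^ 2 * r)) : θ = 1 ∧ (c = a ∨ c = -a) := by
  have hθμ : θ * μ ^ 2 = 1 := mul_right_cancel₀ hr (by linear_combination -h)
  obtain rfl : θ = 1 := hθ.resolve_right fun hθ => by nlinarith [sq_nonneg μ]
  refine ⟨rfl, ?_⟩
  rcases sq_eq_one_iff.mp (by linarith : μ ^ 2 = 1) with rfl | rfl
  · exact Or.inl (by rw [hc, one_smul])
  · exact Or.inr (by rw [hc, neg_one_smul])

section RS

variable {E : Type*} [NormedAddCommGroup E] [InnerProductSpace ℝ E] {A C : E →ₗ[ℝ] E}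

theorem RS_smul (μ : ℝ) (x y z w : E) : RS (μ • A) x y z w = μ ^ 2 * RS A x y z w := by
  simp only [RS, LinearMap.smul_apply, real_inner_smul_left]
  ring

theorem RL_smul (μ : ℝ) (x y z w : E) : RL (μ • A) x y z w = μ ^ 2 * RL A x y z w := by
  simp only [RL, RS_smul, LinearMap.smul_apply, real_inner_smul_left]
  ring

theorem exists_RS_ne_zero (hA : 2 ≤ Module.finrank ℝ (LinearMap.range A)) :
    ∃ x y z w, RS A x y z w ≠ 0 := by
  classical
  by_contra! h
  have hA0 : A ≠ 0 := by
    rintro rfl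
    rw [LinearMap.range_zero, finrank_bot] at hA
    omega
  obtain ⟨x, hx⟩ : ∃ x, A x ≠ 0 := by
    by_contra! h0
    exact hA0 (LinearMap.ext h0)
  have hxx : ⟪A x, A x⟫ ≠ 0 := inner_self_ne_zero.mpr hx
  have hspan : ∀ y, A y ∈ Submodule.span ℝ (({A x} : Finset E) : Set E) := fun y => by
    have hvec : ⟪A x, A x⟫ • A y = ⟪A y, A x⟫ • A x := ext_inner_right ℝ fun w => by
      have := h x y (A x) w
      simp only [RS] at this
      simp only [real_inner_smul_left]
      linarith
    rw [Finset.coe_singleton, Submodule.mem_span_singleton]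
    exact ⟨_, ((eq_inv_smul_iff₀ hxx).mpr hvec).trans (smul_smul _ _ _) |>.symm⟩
  have := finrank_range_le_card_of_forall_mem_span A _ hspan
  rw [Finset.card_singleton] at this
  omega

theorem exists_smul_of_RS_eq_smul_RS {θ : ℝ} (hθ : θ ≠ 0)
    (h : ∀ x y z w, RS A x y z w = θ * RS C x y z w)
    (hC : 3 ≤ Module.finrank ℝ (LinearMap.range C)) (x : E) : ∃ c : ℝ, C x = c • A x := by
  classical
  by_contra! hCx
  set K := Submodule.span ℝ (({A x, C x} : Finset E) : Set E)
  suffices hspan : ∀ y, C y ∈ K by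
    have := (finrank_range_le_card_of_forall_mem_span C _ hspan).trans Finset.card_le_two
    omega
  intro y
  rw [← K.orthogonal_orthogonal, Submodule.mem_orthogonal']
  intro z hz
  have hAz : ⟪A x, z⟫ = 0 :=
    K.inner_right_of_mem_orthogonal (Submodule.subset_span (by simp)) hz
  have hCz : ⟪C x, z⟫ = 0 :=
    K.inner_right_of_mem_orthogonal (Submodule.subset_span (by simp)) hz
  have hvec : ⟪A y, z⟫ • A x = (θ * ⟪C y, z⟫) • C x := ext_inner_right ℝ fun w => by
    have := h x y z w
    simp only [RS, hAz, hCz] at this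
    simp only [real_inner_smul_left]
    linarith
  by_contra hyz
  have hne : θ * ⟪C y, z⟫ ≠ 0 := mul_ne_zero hθ hyz
  exact hCx _ (((eq_inv_smul_iff₀ hne).mpr hvec.symm).trans (smul_smul _ _ _))

theorem eq_or_eq_neg_of_RS_eq_smul_RS {θ : ℝ} (hθ : θ = 1 ∨ θ = -1)
    (h : ∀ x y z w, RS A x y z w = θ * RS C x y z w)
    (hA : 2 ≤ Module.finrank ℝ (LinearMap.range A))
    (hC : 3 ≤ Module.finrank ℝ (LinearMap.range C)) : θ = 1 ∧ (C = A ∨ C = -A) := by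
  have hθ0 : θ ≠ 0 := by rcases hθ with rfl | rfl <;> norm_num
  obtain ⟨μ, hμ⟩ :=
    LinearMap.exists_eq_smul_of_forall_exists_smul (exists_smul_of_RS_eq_smul_RS hθ0 h hC)
  obtain ⟨x, y, z, w, hne⟩ := exists_RS_ne_zero hA
  exact eq_or_eq_neg_of_eq_smul hθ hμ hne (by rw [← RS_smul, ← hμ]; exact h x y z w)

end RS

section Canonical

variable {A B C : V →ₗ[ℝ] V}

theorem LinearMap.comp_eq_zero_of_adjoint_eq_or_neg
    (hA : LinearMap.adjoint A = A ∨ LinearMap.adjoint A = -A)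
    (hB : LinearMap.adjoint B = B ∨ LinearMap.adjoint B = -B) (h : A ∘ₗ B = 0) :
    B ∘ₗ A = 0 := by
  have h' := congrArg LinearMap.adjoint h
  rw [LinearMap.adjoint_comp, map_zero] at h'
  rcases hA with hA | hA <;> rcases hB with hB | hB <;>
    simpa only [hA, hB, LinearMap.neg_comp, LinearMap.comp_neg, neg_neg, neg_eq_zero] using h'

theorem LinearMap.range_adjoint_of_adjoint_eq_or_neg
    (hA : LinearMap.adjoint A = A ∨ LinearMap.adjoint A = -A) :
    LinearMap.range (LinearMap.adjoint A) = LinearMap.range A := by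
  rcases hA with hA | hA <;> rw [hA]
  exact LinearMap.range_neg A

theorem inner_apply_comm_of_adjoint_eq_neg (hA : LinearMap.adjoint A = -A) (x y : V) :
    ⟪A x, y⟫ = -⟪A y, x⟫ := by
  have h := LinearMap.adjoint_inner_left A x y
  rw [hA, LinearMap.neg_apply, inner_neg_left] at h
  linarith [real_inner_comm (A x) y]

theorem inner_apply_self_of_adjoint_eq_neg (hA : LinearMap.adjoint A = -A) (x : V) :
    ⟪A x, x⟫ = 0 := by
  linarith [inner_apply_comm_of_adjoint_eq_neg hA x x]

theorem exists_inner_apply_self_ne_zero (hA : LinearMap.adjoint A = A) (hA0 : A ≠ 0) :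
    ∃ x, ⟪A x, x⟫ ≠ 0 := by
  have hsymm : A.IsSymmetric :=
    (LinearMap.isSymmetric_iff_isSelfAdjoint A).mpr (LinearMap.isSelfAdjoint_iff'.mpr hA)
  by_contra! h
  exact hA0 (hsymm.inner_map_self_eq_zero.mp h)

theorem inner_map_starProjection (K : Submodule ℝ V) (hA : LinearMap.range A ≤ K)
    (hA' : LinearMap.range (LinearMap.adjoint A) ≤ K) (x y : V) :
    ⟪A (K.starProjection x), K.starProjection y⟫ = ⟪A x, y⟫ := by
  calc ⟪A (K.starProjection x), K.starProjection y⟫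
      = ⟪K.starProjection (A (K.starProjection x)), y⟫ :=
        (K.inner_starProjection_left_eq_right _ _).symm
    _ = ⟪K.starProjection x, LinearMap.adjoint A y⟫ := by
        rw [K.starProjection_eq_self_iff.mpr (hA ⟨_, rfl⟩), LinearMap.adjoint_inner_right]
    _ = ⟪x, K.starProjection (LinearMap.adjoint A y)⟫ :=
        K.inner_starProjection_left_eq_right _ _
    _ = ⟪A x, y⟫ := by
        rw [K.starProjection_eq_self_iff.mpr (hA' ⟨_, rfl⟩), LinearMap.adjoint_inner_right]

theorem RL_apply_self_of_adjoint_eq_neg (hA : LinearMap.adjoint A = -A) (x y w : V) :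
    RL A x y x w = 3 * ⟪A y, x⟫ * ⟪A x, w⟫ := by
  simp only [RL, RS]
  rw [inner_apply_self_of_adjoint_eq_neg hA, inner_apply_comm_of_adjoint_eq_neg hA x y]
  ring

theorem Rcanon_comp {f : V → V} (hf : ∀ x y, ⟪A (f x), f y⟫ = ⟪A x, y⟫) (x y z w : V) :
    Rcanon A (f x) (f y) (f z) (f w) = Rcanon A x y z w := by
  unfold Rcanon
  split_ifs <;> simp only [RS, RL, hf]

theorem Rcanon_eq_zero_of_apply_eq_zero {x : V} (hx : A x = 0) (y z w : V) :
    Rcanon A x y z w = 0 := by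
  unfold Rcanon
  split_ifs <;> simp [RS, RL, hx]

theorem exists_smul_of_RL_eq_smul_RL (hA : LinearMap.adjoint A = -A)
    (hC : LinearMap.adjoint C = -C) {θ : ℝ} (hθ : θ ≠ 0)
    (h : ∀ x y z w, RL A x y z w = θ * RL C x y z w) (x : V) : ∃ c : ℝ, C x = c • A x := by
  by_cases hCx : C x = 0
  · exact ⟨0, by rw [hCx, zero_smul]⟩
  have hvec : ⟪A (C x), x⟫ • A x = (-(θ * ⟪C x, C x⟫)) • C x :=
    ext_inner_right ℝ fun w => by
      have := h x (C x) x w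
      rw [RL_apply_self_of_adjoint_eq_neg hA, RL_apply_self_of_adjoint_eq_neg hC,
        inner_apply_comm_of_adjoint_eq_neg hC (C x) x] at this
      simp only [real_inner_smul_left]
      linarith
  have hne : -(θ * ⟪C x, C x⟫) ≠ 0 :=
    neg_ne_zero.mpr (mul_ne_zero hθ (inner_self_ne_zero.mpr hCx))
  exact ⟨_, ((eq_inv_smul_iff₀ hne).mpr hvec.symm).trans (smul_smul _ _ _)⟩

theorem finrank_range_le_two_of_RS_eq_smul_RL (hA : LinearMap.adjoint A = A)
    (hC : LinearMap.adjoint C = -C) (σ : ℝ) (h : ∀ x y z w, RS A x y z w = σ * RL C x y z w) :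
    Module.finrank ℝ (LinearMap.range A) ≤ 2 := by
  classical
  by_cases hA0 : A = 0
  · rw [hA0, LinearMap.range_zero, finrank_bot]
    omega
  obtain ⟨x, hx⟩ := exists_inner_apply_self_ne_zero hA hA0
  refine (finrank_range_le_card_of_forall_mem_span A {A x, C x} fun y => ?_).trans
    Finset.card_le_two
  have hvec : ⟪A x, x⟫ • A y = ⟪A y, x⟫ • A x - (3 * σ * ⟪C y, x⟫) • C x :=
    ext_inner_right ℝ fun w => by
      have := h x y x w
      rw [RL_apply_self_of_adjoint_eq_neg hC] at this
      simp only [RS] at this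
      simp only [inner_sub_left, real_inner_smul_left]
      linarith
  rw [Finset.coe_insert, Finset.coe_singleton, Submodule.mem_span_pair,
    (eq_inv_smul_iff₀ hx).mpr hvec]
  exact ⟨⟪A x, x⟫⁻¹ * ⟪A y, x⟫, -(⟪A x, x⟫⁻¹ * (3 * σ * ⟪C y, x⟫)), by module⟩

theorem eq_or_eq_neg_of_RL_eq_smul_RL (hA : LinearMap.adjoint A = -A)
    (hC : LinearMap.adjoint C = -C) (hA0 : A ≠ 0) {θ : ℝ} (hθ : θ = 1 ∨ θ = -1)
    (h : ∀ x y z w, RL A x y z w = θ * RL C x y z w) : θ = 1 ∧ (C = A ∨ C = -A) := by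
  have hθ0 : θ ≠ 0 := by rcases hθ with rfl | rfl <;> norm_num
  obtain ⟨μ, hμ⟩ := LinearMap.exists_eq_smul_of_forall_exists_smul
    (exists_smul_of_RL_eq_smul_RL hA hC hθ0 h)
  obtain ⟨x, hx⟩ : ∃ x, A x ≠ 0 := by
    by_contra! h0
    exact hA0 (LinearMap.ext h0)
  refine eq_or_eq_neg_of_eq_smul hθ hμ (r := RL A x (A x) x (A x)) ?_
    (by rw [← RL_smul, ← hμ]; exact h _ _ _ _)
  rw [RL_apply_self_of_adjoint_eq_neg hA, inner_apply_comm_of_adjoint_eq_neg hA (A x) x]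
  have hxx := (inner_self_ne_zero (𝕜 := ℝ)).mpr hx
  exact mul_ne_zero (mul_ne_zero three_ne_zero (neg_ne_zero.mpr hxx)) hxx

theorem eq_or_eq_neg_of_Rcanon_eq_smul_Rcanon
    (hA : LinearMap.adjoint A = A ∨ LinearMap.adjoint A = -A)
    (hC : LinearMap.adjoint C = C ∨ LinearMap.adjoint C = -C)
    (hrA : 3 ≤ Module.finrank ℝ (LinearMap.range A))
    (hrC : 3 ≤ Module.finrank ℝ (LinearMap.range C)) {θ : ℝ} (hθ : θ = 1 ∨ θ = -1)
    (h : ∀ x y z w, Rcanon A x y z w = θ * Rcanon C x y z w) :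
    θ = 1 ∧ (C = A ∨ C = -A) := by
  unfold Rcanon at h
  by_cases hAs : LinearMap.adjoint A = A <;> by_cases hCs : LinearMap.adjoint C = C <;>
    simp only [hAs, hCs, if_true, if_false] at h
  · exact eq_or_eq_neg_of_RS_eq_smul_RS hθ h (by omega) hrC
  · have := finrank_range_le_two_of_RS_eq_smul_RL hAs (hC.resolve_left hCs) θ h
    omega
  · have hθθ : θ * θ = 1 := by rcases hθ with rfl | rfl <;> norm_num
    have := finrank_range_le_two_of_RS_eq_smul_RL hCs (hA.resolve_left hAs) θ
      fun x y z w => by rw [h, ← mul_assoc, hθθ, one_mul]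
    omega
  · refine eq_or_eq_neg_of_RL_eq_smul_RL (hA.resolve_left hAs) (hC.resolve_left hCs) ?_ hθ h
    rintro rfl
    rw [LinearMap.range_zero, finrank_bot] at hrA
    omega

theorem eq_zero_of_Rcanon_eq_zero (hB : LinearMap.adjoint B = -B)
    (h : ∀ x y z w, Rcanon B x y z w = 0) : B = 0 := by
  by_cases hBs : LinearMap.adjoint B = B
  · have hBB : (2 : ℝ) • B = 0 := by
      rw [two_smul]
      nth_rewrite 1 [hBs.symm.trans hB]
      exact neg_add_cancel B
    exact (smul_eq_zero.mp hBB).resolve_left two_ne_zero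
  have hinner : ∀ x y, ⟪B x, y⟫ = 0 := fun x y => by
    have := h x y x y
    rw [Rcanon, if_neg hBs, RL_apply_self_of_adjoint_eq_neg hB,
      inner_apply_comm_of_adjoint_eq_neg hB y x] at this
    nlinarith [sq_nonneg ⟪B x, y⟫]
  exact LinearMap.ext fun x => inner_self_eq_zero.mp (hinner x (B x))

theorem Rcanon_add_smul_Rcanon_eq_zero
    (hA : LinearMap.adjoint A = A ∨ LinearMap.adjoint A = -A)
    (hB : LinearMap.adjoint B = B ∨ LinearMap.adjoint B = -B)
    (hC : LinearMap.adjoint C = C ∨ LinearMap.adjoint C = -C)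
    (hBA : B ∘ₗ A = 0) (hCB : C ∘ₗ B = 0) (ε δ : ℝ)
    (hsum : ∀ x y z w : V,
      Rcanon A x y z w + ε * Rcanon B x y z w + δ * Rcanon C x y z w = 0) (x y z w : V) :
    Rcanon A x y z w + δ * Rcanon C x y z w = 0 := by
  set P := (LinearMap.ker B).starProjection
  have hBC : B ∘ₗ C = 0 := LinearMap.comp_eq_zero_of_adjoint_eq_or_neg hC hB hCB
  have hAK : LinearMap.range A ≤ LinearMap.ker B := LinearMap.range_le_ker_iff.mpr hBA
  have hCK : LinearMap.range C ≤ LinearMap.ker B := LinearMap.range_le_ker_iff.mpr hBC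
  have hPA : ∀ x y, ⟪A (P x), P y⟫ = ⟪A x, y⟫ := inner_map_starProjection _ hAK
    (by rwa [LinearMap.range_adjoint_of_adjoint_eq_or_neg hA])
  have hPC : ∀ x y, ⟪C (P x), P y⟫ = ⟪C x, y⟫ := inner_map_starProjection _ hCK
    (by rwa [LinearMap.range_adjoint_of_adjoint_eq_or_neg hC])
  have := hsum (P x) (P y) (P z) (P w)
  rwa [Rcanon_comp hPA, Rcanon_comp hPC,
    Rcanon_eq_zero_of_apply_eq_zero ((LinearMap.ker B).starProjection_apply_mem x),
    mul_zero, add_zero] at this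

end Canonical

theorem stmt_13 (A B C : V →ₗ[ℝ] V)
    (hA : LinearMap.adjoint A = A ∨ LinearMap.adjoint A = -A)
    (hB : LinearMap.adjoint B = B ∨ LinearMap.adjoint B = -B)
    (hC : LinearMap.adjoint C = C ∨ LinearMap.adjoint C = -C)
    (hBA : B ∘ₗ A = 0) (hCB : C ∘ₗ B = 0)
    (hrankA : 4 ≤ Module.finrank ℝ (LinearMap.range A))
    (hrankC : 4 ≤ Module.finrank ℝ (LinearMap.range C))
    (ε δ : ℝ) (hε : ε = 1 ∨ ε = -1) (hδ : δ = 1 ∨ δ = -1)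
    (hsum : ∀ x y z w : V,
      Rcanon A x y z w + ε * Rcanon B x y z w + δ * Rcanon C x y z w = 0) :
    (δ = -1 ∧ (C = A ∨ C = -A)) ∧
    ((LinearMap.range A = LinearMap.ker B ∧ LinearMap.range B = LinearMap.ker C ∧
        LinearMap.adjoint B = -B) →
      Function.Bijective A ∧ Function.Bijective C) := by
  have hAC := Rcanon_add_smul_Rcanon_eq_zero hA hB hC hBA hCB ε δ hsum
  have hB0 : ∀ x y z w, Rcanon B x y z w = 0 := fun x y z w => by
    have := hsum x y z w
    have := hAC x y z w
    rcases hε with rfl | rfl <;> linarith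
  obtain ⟨hδ', hCA⟩ := eq_or_eq_neg_of_Rcanon_eq_smul_Rcanon hA hC (by omega) (by omega)
    (θ := -δ) (by rcases hδ with rfl | rfl <;> norm_num)
    fun x y z w => by linear_combination hAC x y z w
  refine ⟨⟨by linarith, hCA⟩, ?_⟩
  rintro ⟨hrA, hrB, hBskew⟩
  obtain rfl := eq_zero_of_Rcanon_eq_zero hBskew hB0
  have hAsurj : Function.Surjective A :=
    LinearMap.range_eq_top.mp (hrA.trans LinearMap.ker_zero)
  have hCinj : Function.Injective C :=
    LinearMap.ker_eq_bot.mp (hrB.symm.trans LinearMap.range_zero)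
  exact ⟨⟨LinearMap.injective_iff_surjective.mpr hAsurj, hAsurj⟩,
    ⟨hCinj, LinearMap.injective_iff_surjective.mp hCinj⟩⟩
end

section
/- Let A, B_1, ..., B_k be linear endomorphisms of V, each self-adjoint or skew-adjoint, such that either B_iA = 0 for all i, or AB_i = 0 for all i. If 0 = R_A + Σ_{i=1}^k ε_i R_{B_i} with ε_i ∈ {−1,1}, using canonical builds, then R_A = 0. -/
open RealInnerProductSpace

variable {V : Type*} [NormedAddCommGroup V] [InnerProductSpace ℝ V] [FiniteDimensional ℝ V]

theorem stmt_14 (k : ℕ) (A : V →ₗ[ℝ] V) (B : Fin k → (V →ₗ[ℝ] V))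
    (hA : LinearMap.adjoint A = A ∨ LinearMap.adjoint A = -A)
    (hB : ∀ i, LinearMap.adjoint (B i) = B i ∨ LinearMap.adjoint (B i) = -(B i))
    (hchain : (∀ i, B i ∘ₗ A = 0) ∨ (∀ i, A ∘ₗ B i = 0))
    (ε : Fin k → ℝ) (hε : ∀ i, ε i = 1 ∨ ε i = -1)
    (hsum : ∀ x y z w : V,
      Rcanon A x y z w + ∑ i, ε i * Rcanon (B i) x y z w = 0) :
    ∀ x y z w : V, Rcanon A x y z w = 0 := by
  -- Step 1: inner products of B i (A u) against A v vanish.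
  have hBA : ∀ (i : Fin k) (u v : V), ⟪(B i) (A u), A v⟫ = 0 := by
    rcases hchain with h | h
    · intro i u v
      have h0 : (B i) (A u) = 0 := by simpa using LinearMap.congr_fun (h i) u
      simp [h0]
    · intro i u v
      have h0 : A ((B i) (A u)) = 0 := by simpa using LinearMap.congr_fun (h i) (A u)
      have key := LinearMap.adjoint_inner_left A v ((B i) (A u))
      -- key : ⟪adjoint A (B i (A u)), v⟫ = ⟪B i (A u), A v⟫
      rcases hA with ha | ha
      · rw [ha] at key
        rw [← key, h0]
        simp
      · rw [ha] at key
        simp only [LinearMap.neg_apply, h0] at key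
        rw [← key]
        simp
  -- Step 2: Rcanon of each B i vanishes on the range of A.
  have hRB : ∀ (i : Fin k) (x y z w : V),
      Rcanon (B i) (A x) (A y) (A z) (A w) = 0 := by
    intro i x y z w
    unfold Rcanon
    split <;> simp [RS, RL, hBA]
  -- Step 3: Rcanon A vanishes on the range of A.
  have hRA0 : ∀ x y z w : V, Rcanon A (A x) (A y) (A z) (A w) = 0 := by
    intro x y z w
    have h := hsum (A x) (A y) (A z) (A w)
    simpa [hRB] using h
  by_cases hsa : LinearMap.adjoint A = A
  · -- self-adjoint case
    have hRc : Rcanon A = RS A := by unfold Rcanon; rw [if_pos hsa]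
    have hsa' : ∀ a b : V, ⟪a, A b⟫ = ⟪A a, b⟫ := by
      intro a b
      rw [← LinearMap.adjoint_inner_left A b a, hsa]
    have key : ∀ u v : V, ⟪A (A u), A v⟫ = ⟪A (A (A u)), v⟫ := fun u v =>
      hsa' (A (A u)) v
    have hRS3 : ∀ x y z w : V,
        ⟪A (A (A x)), w⟫ * ⟪A (A (A y)), z⟫
          - ⟪A (A (A x)), z⟫ * ⟪A (A (A y)), w⟫ = 0 := by
      intro x y z w
      have h := hRA0 x y z w
      rw [hRc] at h
      simpa [RS, key] using h
    -- kernel of A³ is contained in kernel of A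
    have h2 : ∀ u : V, A (A (A u)) = 0 → A u = 0 := by
      intro u hu
      have e2 : A (A u) = 0 := by
        have : ⟪A (A u), A (A u)⟫ = (0 : ℝ) := by
          rw [hsa' (A (A u)) (A u), hu]; simp
        exact inner_self_eq_zero.mp this
      have : ⟪A u, A u⟫ = (0 : ℝ) := by
        rw [hsa' (A u) u, e2]; simp
      exact inner_self_eq_zero.mp this
    -- pairwise dependence
    have h1 : ∀ x y : V,
        ⟪A (A (A y)), A (A (A x))⟫ • A x - ⟪A (A (A x)), A (A (A x))⟫ • A y = 0 := by
      intro x y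
      set tx := A (A (A x)) with htx
      set ty := A (A (A y)) with hty
      have hv : ⟪ty, tx⟫ • tx - ⟪tx, tx⟫ • ty = 0 := by
        have hall : ∀ w : V, ⟪⟪ty, tx⟫ • tx - ⟪tx, tx⟫ • ty, w⟫ = (0 : ℝ) := by
          intro w
          have h := hRS3 x y tx w
          simp only [inner_sub_left, real_inner_smul_left]
          rw [← htx, ← hty] at h
          nlinarith [real_inner_comm tx w, real_inner_comm ty w, real_inner_comm ty tx]
        have := hall (⟪ty, tx⟫ • tx - ⟪tx, tx⟫ • ty)
        exact inner_self_eq_zero.mp this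
      have h3 : A (A (A (⟪ty, tx⟫ • x - ⟪tx, tx⟫ • y))) = 0 := by
        simpa [map_sub, map_smul, ← htx, ← hty] using hv
      have h4 := h2 _ h3
      simpa [map_sub, map_smul] using h4
    intro x y z w
    rw [hRc]
    by_cases h0 : A (A (A x)) = 0
    · have hx0 := h2 x h0
      simp [RS, hx0]
    · have hc : ⟪A (A (A x)), A (A (A x))⟫ ≠ (0 : ℝ) := fun h =>
        h0 (inner_self_eq_zero.mp h)
      set c := ⟪A (A (A x)), A (A (A x))⟫ with hcdef
      set d := ⟪A (A (A y)), A (A (A x))⟫ with hddef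
      have h5 : c • A y = d • A x := by
        have := h1 x y
        rw [← hcdef, ← hddef] at this
        rw [sub_eq_zero] at this
        exact this.symm
      have hy : A y = (c⁻¹ * d) • A x := by
        calc A y = c⁻¹ • (c • A y) := by rw [smul_smul, inv_mul_cancel₀ hc, one_smul]
          _ = c⁻¹ • (d • A x) := by rw [h5]
          _ = (c⁻¹ * d) • A x := by rw [smul_smul]
      simp only [RS, hy, real_inner_smul_left]
      ring
  · -- skew-adjoint case
    have ha : LinearMap.adjoint A = -A := by
      rcases hA with h | h
      · exact absurd h hsa
      · exact h
    have hRc : Rcanon A = RL A := by unfold Rcanon; rw [if_neg hsa]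
    have hsk : ∀ a b : V, ⟪A a, b⟫ = -⟪a, A b⟫ := by
      intro a b
      have := LinearMap.adjoint_inner_left A b a
      rw [ha] at this
      simp only [LinearMap.neg_apply, inner_neg_left] at this
      linarith
    have key : ∀ u v : V, ⟪A (A u), A v⟫ = -⟪A (A (A u)), v⟫ := by
      intro u v
      have h1 : ⟪A (A (A u)), v⟫ = -⟪A (A u), A v⟫ := hsk (A (A u)) v
      linarith
    have hRL3 : ∀ x y z w : V,
        ⟪A (A (A x)), w⟫ * ⟪A (A (A y)), z⟫
          - ⟪A (A (A x)), z⟫ * ⟪A (A (A y)), w⟫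
          - 2 * ⟪A (A (A x)), y⟫ * ⟪A (A (A z)), w⟫ = 0 := by
      intro x y z w
      have h := hRA0 x y z w
      rw [hRc] at h
      simp only [RL, RS, key] at h
      linear_combination h
    have tsk : ∀ a b : V, ⟪A (A (A a)), b⟫ = -⟪a, A (A (A b))⟫ := by
      intro a b
      rw [hsk (A (A a)) b, hsk (A a) (A b), hsk a (A (A b))]
      ring
    have hT0 : ∀ u : V, A (A (A u)) = 0 := by
      intro u
      set t := A (A (A u)) with ht
      have z1 : ⟪t, u⟫ = (0 : ℝ) := by
        have h1 := tsk u u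
        rw [← ht] at h1
        have h2 := real_inner_comm t u
        linarith
      have z2 : ⟪A (A (A t)), t⟫ = (0 : ℝ) := by
        have h1 := tsk t t
        have h2 := real_inner_comm t (A (A (A t)))
        linarith
      have z3 : ⟪A (A (A t)), u⟫ = -⟪t, t⟫ := by
        rw [tsk t u, ← ht]
      have h := hRL3 u t u t
      rw [← ht] at h
      rw [z2, z3] at h
      have hq : ⟪t, t⟫ * ⟪t, t⟫ = 0 := by nlinarith [h, z1]
      exact inner_self_eq_zero.mp (mul_self_eq_zero.mp hq)
    have hA0 : ∀ u : V, A u = 0 := by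
      intro u
      have e2 : A (A u) = 0 := by
        have : ⟪A (A u), A (A u)⟫ = (0 : ℝ) := by
          rw [hsk (A u) (A (A u)), hT0 u]
          simp
        exact inner_self_eq_zero.mp this
      have : ⟪A u, A u⟫ = (0 : ℝ) := by
        rw [hsk u (A u), e2]
        simp
      exact inner_self_eq_zero.mp this
    intro x y z w
    rw [hRc]
    simp [RL, RS, hA0]
end

section
/- Let A, B, C, D be linear endomorphisms of V, each self-adjoint or skew-adjoint, forming a chain complex (BA = 0, CB = 0, DC = 0), with rank(B) ≥ 4 and rank(C) ≥ 4. If R_A + ε_1 R_B + ε_2 R_C + ε_3 R_D = 0 with ε_i ∈ {−1,1} (canonical builds), then ε_2 = −1, ε_1 = −ε_3, B³ = ±BDB, and C³ = ±CAC. -/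
/-!
Precomposing the relation with `B` kills `R_A` and `R_C` (as `AB = 0 = CB`) and, since
`T* R_X = R_{T* X T}`, leaves `R_{B* B B} = -ε₁ε₃ R_{B* D B}` with `B* B B = ±B³`; precomposing
with `C` leaves `R_{C* C C} = -ε₂ R_{C* A C}`. Both cases then follow from one uniqueness
statement: if `R_X = s R_Y` with `s = ±1` and `rank X ≥ 3`, then `s = 1` and `Y = ±X`.
To prove it, fix two arguments of the tensors: a relation between the remaining slices that is
not of the expected shape puts the whole range of `X` in a plane. This rules out mixed builds
and shows that `X x` is a multiple of `Y x` for every `x`; the (anti)symmetry of both forms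
makes the multiple a constant `c`, and `R_{cY} = c² R_Y` forces `c² = s`.
-/

open RealInnerProductSpace

variable {V : Type*} [NormedAddCommGroup V] [InnerProductSpace ℝ V] [FiniteDimensional ℝ V]

open LinearMap Module Submodule

section InnerProductSpace

variable {E : Type*} [NormedAddCommGroup E] [InnerProductSpace ℝ E]

lemma exists_inner_ne_zero_and_ne_zero {p q : E} (hp : p ≠ 0) (hq : q ≠ 0) :
    ∃ y, ⟪p, y⟫ ≠ 0 ∧ ⟪q, y⟫ ≠ 0 := by
  have hpp : ⟪p, p⟫ ≠ 0 := inner_self_ne_zero.2 hp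
  by_cases hqp : ⟪q, p⟫ = 0
  · refine ⟨p + q, ?_, ?_⟩
    · rwa [inner_add_right, real_inner_comm q, hqp, add_zero]
    · rwa [inner_add_right, hqp, zero_add, inner_self_ne_zero]
  · exact ⟨p, hpp, hqp⟩

lemma finrank_range_le_two_of_inner_eq (X : E →ₗ[ℝ] E) (p q : E) {k : ℝ} (hk : k ≠ 0)
    (c d : E → ℝ) (h : ∀ y z, k * ⟪X y, z⟫ = c y * ⟪p, z⟫ + d y * ⟪q, z⟫) :
    finrank ℝ (range X) ≤ 2 := by
  have hle : range X ≤ span ℝ {p, q} := by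
    rintro _ ⟨y, rfl⟩
    refine mem_span_pair.2 ⟨c y / k, d y / k, ext_inner_right ℝ fun z => ?_⟩
    rw [inner_add_left, real_inner_smul_left, real_inner_smul_left]
    field_simp
    exact (h y z).symm
  have : Module.Finite ℝ (span ℝ ({p, q} : Set E)) :=
    FiniteDimensional.span_of_finite ℝ (Set.toFinite _)
  classical
  calc finrank ℝ (range X) ≤ finrank ℝ (span ℝ ({p, q} : Set E)) := Submodule.finrank_mono hle
    _ ≤ 2 := (finrank_span_le_card _).trans (by simpa using Finset.card_le_two)

lemma finrank_range_le_of_ker_le {F : Type*} [AddCommGroup F] [Module ℝ F] [FiniteDimensional ℝ F]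
    {X Y : F →ₗ[ℝ] F} (h : ker X ≤ ker Y) : finrank ℝ (range Y) ≤ finrank ℝ (range X) := by
  have := finrank_range_add_finrank_ker X
  have := finrank_range_add_finrank_ker Y
  have := Submodule.finrank_mono h
  omega

lemma exists_eq_smul_of_inner_eq_zero_imp {X Y : E →ₗ[ℝ] E} (σ : ℝ)
    (hX : ∀ x y, ⟪X x, y⟫ = σ * ⟪X y, x⟫) (hY : ∀ x y, ⟪Y x, y⟫ = σ * ⟪Y y, x⟫)
    (h : ∀ x y, ⟪Y x, y⟫ = 0 → ⟪X x, y⟫ = 0) : ∃ c : ℝ, X = c • Y := by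
  have hspan (x : E) : ∃ a : ℝ, a • Y x = X x := by
    rw [← mem_span_singleton, ← orthogonal_orthogonal (ℝ ∙ Y x)]
    refine (mem_orthogonal _ _).2 fun u hu => ?_
    rw [real_inner_comm]
    exact h x u (mem_orthogonal_singleton_iff_inner_right.1 hu)
  choose c hc using hspan
  have hc_eq (x y : E) (hxy : ⟪Y x, y⟫ ≠ 0) : c x = c y := by
    refine mul_right_cancel₀ hxy ?_
    calc c x * ⟪Y x, y⟫ = ⟪X x, y⟫ := by rw [← hc, real_inner_smul_left]
      _ = σ * ⟪X y, x⟫ := hX x y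
      _ = c y * (σ * ⟪Y y, x⟫) := by rw [← hc, real_inner_smul_left]; ring
      _ = c y * ⟪Y x, y⟫ := by rw [← hY]
  by_cases hY0 : ∀ a, Y a = 0
  · exact ⟨0, LinearMap.ext fun x => by simp [← hc x, hY0]⟩
  obtain ⟨a, ha⟩ := not_forall.1 hY0
  refine ⟨c a, LinearMap.ext fun x => ?_⟩
  rw [LinearMap.smul_apply, ← hc x]
  by_cases hx : Y x = 0
  · simp [hx]
  obtain ⟨y, hxy, hay⟩ := exists_inner_ne_zero_and_ne_zero hx ha
  rw [hc_eq x y hxy, hc_eq a y hay]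

end InnerProductSpace

def IsSelfOrSkewAdjoint (X : V →ₗ[ℝ] V) : Prop :=
  adjoint X = X ∨ adjoint X = -X

lemma inner_map_comm_of_adjoint_eq_self {X : V →ₗ[ℝ] V} (hX : adjoint X = X) (x y : V) :
    ⟪X x, y⟫ = ⟪X y, x⟫ := by
  rw [(isSymmetric_iff_isSelfAdjoint X).2 hX, real_inner_comm]

lemma inner_map_comm_of_adjoint_eq_neg {X : V →ₗ[ℝ] V} (hX : adjoint X = -X) (x y : V) :
    ⟪X x, y⟫ = -⟪X y, x⟫ := by
  rw [← adjoint_inner_right, hX, LinearMap.neg_apply, inner_neg_right, real_inner_comm]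

lemma inner_map_self_of_adjoint_eq_neg {X : V →ₗ[ℝ] V} (hX : adjoint X = -X) (x : V) :
    ⟪X x, x⟫ = 0 := by
  linarith [inner_map_comm_of_adjoint_eq_neg hX x x]

lemma Rcanon_of_adjoint_eq_self {X : V →ₗ[ℝ] V} (hX : adjoint X = X) : Rcanon X = RS X :=
  if_pos hX

lemma Rcanon_of_adjoint_eq_neg {X : V →ₗ[ℝ] V} (hX : adjoint X = -X) : Rcanon X = RL X := by
  by_cases hX' : adjoint X = X
  · have hX0 : X = 0 := by
      have := hX'.symm.trans hX
      rwa [eq_neg_iff_add_eq_zero, ← two_smul ℝ, smul_eq_zero, or_iff_right two_ne_zero] at this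
    subst hX0
    funext x y z w
    simp [Rcanon, RS, RL]
  · exact if_neg hX'

lemma RL_self_of_adjoint_eq_neg {X : V →ₗ[ℝ] V} (hX : adjoint X = -X) (x y : V) :
    RL X x y x y = -3 * ⟪X x, y⟫ ^ 2 := by
  simp only [RL, RS, inner_map_self_of_adjoint_eq_neg hX, inner_map_comm_of_adjoint_eq_neg hX y x]
  ring

lemma Rcanon_smul (c : ℝ) (X : V →ₗ[ℝ] V) (x y z w : V) :
    Rcanon (c • X) x y z w = c ^ 2 * Rcanon X x y z w := by
  rcases eq_or_ne c 0 with rfl | hc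
  · simp [Rcanon, RS]
  have hiff : adjoint (c • X) = c • X ↔ adjoint X = X := by
    rw [map_smulₛₗ, starRingEnd_apply, star_trivial, smul_right_inj hc]
  by_cases hX : adjoint X = X
  · rw [Rcanon, Rcanon, if_pos (hiff.2 hX), if_pos hX]
    simp only [RS, LinearMap.smul_apply, real_inner_smul_left]
    ring
  · rw [Rcanon, Rcanon, if_neg (mt hiff.1 hX), if_neg hX]
    simp only [RL, RS, LinearMap.smul_apply, real_inner_smul_left]
    ring

lemma adjoint_adjoint_comp_comp (X T : V →ₗ[ℝ] V) :
    adjoint (adjoint T ∘ₗ X ∘ₗ T) = adjoint T ∘ₗ adjoint X ∘ₗ T := by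
  rw [adjoint_comp, adjoint_comp, adjoint_adjoint, comp_assoc]

lemma RS_precomp (X T : V →ₗ[ℝ] V) (x y z w : V) :
    RS X (T x) (T y) (T z) (T w) = RS (adjoint T ∘ₗ X ∘ₗ T) x y z w := by
  simp only [RS, comp_apply, adjoint_inner_left]

lemma RL_precomp (X T : V →ₗ[ℝ] V) (x y z w : V) :
    RL X (T x) (T y) (T z) (T w) = RL (adjoint T ∘ₗ X ∘ₗ T) x y z w := by
  simp only [RL, RS_precomp, comp_apply, adjoint_inner_left]

lemma Rcanon_precomp {X : V →ₗ[ℝ] V} (hX : IsSelfOrSkewAdjoint X) (T : V →ₗ[ℝ] V) (x y z w : V) :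
    Rcanon X (T x) (T y) (T z) (T w) = Rcanon (adjoint T ∘ₗ X ∘ₗ T) x y z w := by
  rcases hX with hX | hX
  · have hconj : adjoint (adjoint T ∘ₗ X ∘ₗ T) = adjoint T ∘ₗ X ∘ₗ T := by
      rw [adjoint_adjoint_comp_comp, hX]
    rw [Rcanon_of_adjoint_eq_self hX, Rcanon_of_adjoint_eq_self hconj, RS_precomp]
  · have hconj : adjoint (adjoint T ∘ₗ X ∘ₗ T) = -(adjoint T ∘ₗ X ∘ₗ T) := by
      rw [adjoint_adjoint_comp_comp, hX, neg_comp, comp_neg]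
    rw [Rcanon_of_adjoint_eq_neg hX, Rcanon_of_adjoint_eq_neg hconj, RL_precomp]

lemma Rcanon_precomp_eq_zero {X T : V →ₗ[ℝ] V} (h : X ∘ₗ T = 0) (x y z w : V) :
    Rcanon X (T x) (T y) (T z) (T w) = 0 := by
  have hXT : ∀ v, X (T v) = 0 := fun v => LinearMap.congr_fun h v
  unfold Rcanon
  split_ifs <;> simp [RS, RL, hXT]

lemma IsSelfOrSkewAdjoint.adjoint_conj {X : V →ₗ[ℝ] V} (hX : IsSelfOrSkewAdjoint X)
    (T : V →ₗ[ℝ] V) : IsSelfOrSkewAdjoint (adjoint T ∘ₗ X ∘ₗ T) := by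
  rw [IsSelfOrSkewAdjoint, adjoint_adjoint_comp_comp]
  rcases hX with hX | hX
  · exact Or.inl (by rw [hX])
  · exact Or.inr (by rw [hX, neg_comp, comp_neg])

lemma IsSelfOrSkewAdjoint.comp_eq_zero_comm {P Q : V →ₗ[ℝ] V} (hP : IsSelfOrSkewAdjoint P)
    (hQ : IsSelfOrSkewAdjoint Q) (h : Q ∘ₗ P = 0) : P ∘ₗ Q = 0 := by
  have h' : adjoint P ∘ₗ adjoint Q = 0 := by rw [← adjoint_comp, h, map_zero]
  rcases hP with hP | hP <;> rcases hQ with hQ | hQ <;>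
    simpa [hP, hQ] using h'

lemma IsSelfOrSkewAdjoint.ker_adjoint_comp_comp_self {T : V →ₗ[ℝ] V}
    (hT : IsSelfOrSkewAdjoint T) : ker (adjoint T ∘ₗ T ∘ₗ T) = ker T := by
  have hadj : ∀ u, adjoint T u = 0 ↔ T u = 0 := by
    rcases hT with hT | hT <;> simp [hT]
  have hgram (u : V) : adjoint T (T u) = 0 ↔ T u = 0 := by
    simpa using SetLike.ext_iff.1 (ker_adjoint_comp_self T) u
  ext u
  simp only [mem_ker, comp_apply]
  rw [hgram, ← hadj, hgram]

lemma IsSelfOrSkewAdjoint.finrank_range_adjoint_comp_comp_self {T : V →ₗ[ℝ] V}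
    (hT : IsSelfOrSkewAdjoint T) :
    finrank ℝ (range (adjoint T ∘ₗ T ∘ₗ T)) = finrank ℝ (range T) :=
  le_antisymm (finrank_range_le_of_ker_le hT.ker_adjoint_comp_comp_self.ge)
    (finrank_range_le_of_ker_le hT.ker_adjoint_comp_comp_self.le)

lemma finrank_range_le_two_of_RS_slice {X : V →ₗ[ℝ] V} (hX : adjoint X = X) (P : V → V)
    (k : V → V → ℝ) (h : ∀ x y z, RS X x y z x = k x y * ⟪P x, z⟫) :
    finrank ℝ (range X) ≤ 2 := by
  by_cases hdiag : ∀ x, ⟪X x, x⟫ = 0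
  · have hX0 : X = 0 := ((isSymmetric_iff_isSelfAdjoint X).2 hX).inner_map_self_eq_zero.1 hdiag
    rw [hX0, range_zero, finrank_bot]
    norm_num
  obtain ⟨x, hx⟩ := not_forall.1 hdiag
  refine finrank_range_le_two_of_inner_eq X (X x) (P x) hx (fun y => ⟪X x, y⟫) (k x)
    fun y z => ?_
  have hslice := h x y z
  rw [RS, inner_map_comm_of_adjoint_eq_self hX y x] at hslice
  linear_combination hslice

lemma finrank_range_le_two_of_RS_eq_RL {X Y : V →ₗ[ℝ] V} (hX : adjoint X = X)
    (hY : adjoint Y = -Y) {s : ℝ} (h : ∀ x y z w, RS X x y z w = s * RL Y x y z w) :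
    finrank ℝ (range X) ≤ 2 :=
  finrank_range_le_two_of_RS_slice hX Y (fun x y => 3 * s * ⟪Y x, y⟫) fun x y z => by
    rw [h, RL, RS, inner_map_self_of_adjoint_eq_neg hY, inner_map_comm_of_adjoint_eq_neg hY y x,
      inner_map_comm_of_adjoint_eq_neg hY z x]
    ring

lemma ker_le_ker_of_RS_eq_RL {X Y : V →ₗ[ℝ] V} (hY : adjoint Y = -Y) {s : ℝ} (hs : s ≠ 0)
    (h : ∀ x y z w, RS X x y z w = s * RL Y x y z w) : ker X ≤ ker Y := by
  intro y hy
  rw [mem_ker] at hy ⊢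
  have hslice := h y (Y y) y (Y y)
  rw [RL_self_of_adjoint_eq_neg hY] at hslice
  simp only [RS, hy, inner_zero_left, zero_mul, sub_zero] at hslice
  simpa [hs] using hslice

lemma exists_eq_smul_of_RS_eq {X Y : V →ₗ[ℝ] V} (hX : adjoint X = X) (hY : adjoint Y = Y)
    {s : ℝ} (h : ∀ x y z w, RS X x y z w = s * RS Y x y z w) (hrk : 3 ≤ finrank ℝ (range X)) :
    ∃ c : ℝ, X = c • Y := by
  refine exists_eq_smul_of_inner_eq_zero_imp 1
    (by simpa using inner_map_comm_of_adjoint_eq_self hX)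
    (by simpa using inner_map_comm_of_adjoint_eq_self hY) fun x a hYxa => ?_
  by_contra hXxa
  -- the slice at `w = a` lies in the span of `X x` and `Y x` because `⟪Y x, a⟫ = 0`
  have hrk2 := finrank_range_le_two_of_inner_eq X (X x) (Y x) hXxa (fun y => ⟪X y, a⟫)
    (fun y => -s * ⟪Y y, a⟫) fun y z => by
      have hslice := h x y z a
      rw [RS, RS, hYxa] at hslice
      linear_combination hslice
  omega

lemma exists_eq_smul_of_RL_eq {X Y : V →ₗ[ℝ] V} (hX : adjoint X = -X) (hY : adjoint Y = -Y)
    {s : ℝ} (h : ∀ x y z w, RL X x y z w = s * RL Y x y z w) : ∃ c : ℝ, X = c • Y := by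
  refine exists_eq_smul_of_inner_eq_zero_imp (-1)
    (by simpa using inner_map_comm_of_adjoint_eq_neg hX)
    (by simpa using inner_map_comm_of_adjoint_eq_neg hY) fun x y hYxy => ?_
  have hslice := h x y x y
  rw [RL_self_of_adjoint_eq_neg hX, RL_self_of_adjoint_eq_neg hY, hYxy] at hslice
  simpa using hslice

lemma exists_Rcanon_ne_zero {X : V →ₗ[ℝ] V} (hX : IsSelfOrSkewAdjoint X)
    (hrk : 3 ≤ finrank ℝ (range X)) : ∃ x y z w, Rcanon X x y z w ≠ 0 := by
  by_contra! h0
  rcases hX with hX | hX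
  · have := finrank_range_le_two_of_RS_slice hX X (fun _ _ => 0) fun x y z => by
      rw [← Rcanon_of_adjoint_eq_self hX, h0, zero_mul]
    omega
  · have hX0 : X = 0 := LinearMap.ext fun x => ext_inner_right ℝ fun y => by
      have := h0 x y x y
      rw [Rcanon_of_adjoint_eq_neg hX, RL_self_of_adjoint_eq_neg hX] at this
      simpa using this
    rw [hX0, range_zero, finrank_bot] at hrk
    omega

lemma eq_or_eq_neg_of_Rcanon_eq_smul {X Y : V →ₗ[ℝ] V} (hX : IsSelfOrSkewAdjoint X)
    (hY : IsSelfOrSkewAdjoint Y) {s : ℝ} (hs : s = 1 ∨ s = -1)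
    (h : ∀ x y z w, Rcanon X x y z w = s * Rcanon Y x y z w) (hrk : 3 ≤ finrank ℝ (range X)) :
    s = 1 ∧ (Y = X ∨ Y = -X) := by
  obtain ⟨x, y, z, w, hne⟩ := exists_Rcanon_ne_zero hX hrk
  obtain ⟨c, rfl⟩ : ∃ c : ℝ, X = c • Y := by
    rcases hX with hX | hX <;> rcases hY with hY | hY
    · rw [Rcanon_of_adjoint_eq_self hX, Rcanon_of_adjoint_eq_self hY] at h
      exact exists_eq_smul_of_RS_eq hX hY h hrk
    · rw [Rcanon_of_adjoint_eq_self hX, Rcanon_of_adjoint_eq_neg hY] at h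
      have := finrank_range_le_two_of_RS_eq_RL hX hY h
      omega
    · rw [Rcanon_of_adjoint_eq_neg hX, Rcanon_of_adjoint_eq_self hY] at h
      have h' : ∀ x y z w, RS Y x y z w = s * RL X x y z w := fun x y z w => by
        rcases hs with rfl | rfl <;> linarith [h x y z w]
      have hs0 : s ≠ 0 := by rcases hs with rfl | rfl <;> norm_num
      have := (finrank_range_le_of_ker_le (ker_le_ker_of_RS_eq_RL hX hs0 h')).trans
        (finrank_range_le_two_of_RS_eq_RL hY hX h')
      omega
    · rw [Rcanon_of_adjoint_eq_neg hX, Rcanon_of_adjoint_eq_neg hY] at h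
      exact exists_eq_smul_of_RL_eq hX hY h
  have hc : c ^ 2 = s := by
    have hxyzw := h x y z w
    rw [Rcanon_smul] at hxyzw hne
    exact mul_right_cancel₀ (right_ne_zero_of_mul hne) hxyzw
  have hs1 : s = 1 := hs.resolve_right fun hs1 => by nlinarith [sq_nonneg c]
  refine ⟨hs1, ?_⟩
  rcases sq_eq_one_iff.1 (hc.trans hs1) with rfl | rfl
  · simp
  · simp

lemma IsSelfOrSkewAdjoint.pow_three_eq_or_eq_neg {T X : V →ₗ[ℝ] V} (hT : IsSelfOrSkewAdjoint T)
    (hX : IsSelfOrSkewAdjoint X) (hrk : 3 ≤ finrank ℝ (range T)) {s : ℝ} (hs : s = 1 ∨ s = -1)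
    (h : ∀ x y z w, Rcanon T (T x) (T y) (T z) (T w) = s * Rcanon X (T x) (T y) (T z) (T w)) :
    s = 1 ∧ (T ^ 3 = T ∘ₗ X ∘ₗ T ∨ T ^ 3 = -(T ∘ₗ X ∘ₗ T)) := by
  simp only [Rcanon_precomp hT, Rcanon_precomp hX] at h
  obtain ⟨hs1, hXT⟩ := eq_or_eq_neg_of_Rcanon_eq_smul (hT.adjoint_conj T) (hX.adjoint_conj T) hs h
    (by rwa [hT.finrank_range_adjoint_comp_comp_self])
  refine ⟨hs1, ?_⟩
  have hpow : T ^ 3 = T ∘ₗ T ∘ₗ T := pow_three T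
  have hXT' : T ∘ₗ X ∘ₗ T = T ∘ₗ T ∘ₗ T ∨ T ∘ₗ X ∘ₗ T = -(T ∘ₗ T ∘ₗ T) := by
    rcases hT with hT | hT <;> simpa only [hT, neg_comp, neg_neg, neg_eq_iff_eq_neg] using hXT
  rcases hXT' with hXT' | hXT'
  · exact Or.inl (hpow.trans hXT'.symm)
  · exact Or.inr (by rw [hpow, hXT', neg_neg])

theorem stmt_15 (A B C D : V →ₗ[ℝ] V)
    (hA : LinearMap.adjoint A = A ∨ LinearMap.adjoint A = -A)
    (hB : LinearMap.adjoint B = B ∨ LinearMap.adjoint B = -B)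
    (hC : LinearMap.adjoint C = C ∨ LinearMap.adjoint C = -C)
    (hD : LinearMap.adjoint D = D ∨ LinearMap.adjoint D = -D)
    (hBA : B ∘ₗ A = 0) (hCB : C ∘ₗ B = 0) (hDC : D ∘ₗ C = 0)
    (hrankB : 4 ≤ Module.finrank ℝ (LinearMap.range B))
    (hrankC : 4 ≤ Module.finrank ℝ (LinearMap.range C))
    (ε₁ ε₂ ε₃ : ℝ) (h1 : ε₁ = 1 ∨ ε₁ = -1) (h2 : ε₂ = 1 ∨ ε₂ = -1) (h3 : ε₃ = 1 ∨ ε₃ = -1)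
    (hsum : ∀ x y z w : V,
      Rcanon A x y z w + ε₁ * Rcanon B x y z w + ε₂ * Rcanon C x y z w
        + ε₃ * Rcanon D x y z w = 0) :
    ε₂ = -1 ∧ ε₁ = -ε₃ ∧
    (B ^ 3 = B ∘ₗ D ∘ₗ B ∨ B ^ 3 = -(B ∘ₗ D ∘ₗ B)) ∧
    (C ^ 3 = C ∘ₗ A ∘ₗ C ∨ C ^ 3 = -(C ∘ₗ A ∘ₗ C)) := by
  have hAB : A ∘ₗ B = 0 := IsSelfOrSkewAdjoint.comp_eq_zero_comm hA hB hBA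
  have hBC : B ∘ₗ C = 0 := IsSelfOrSkewAdjoint.comp_eq_zero_comm hB hC hCB
  obtain ⟨hε₁₃, hBcube⟩ := IsSelfOrSkewAdjoint.pow_three_eq_or_eq_neg (s := -(ε₁ * ε₃)) hB hD
    (by omega) (by rcases h1 with rfl | rfl <;> rcases h3 with rfl | rfl <;> norm_num)
    fun x y z w => by
      have hBx := hsum (B x) (B y) (B z) (B w)
      rw [Rcanon_precomp_eq_zero hAB, Rcanon_precomp_eq_zero hCB] at hBx
      rcases h1 with rfl | rfl <;> linarith
  obtain ⟨hε₂, hCcube⟩ := IsSelfOrSkewAdjoint.pow_three_eq_or_eq_neg (s := -ε₂) hC hA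
    (by omega) (by rcases h2 with rfl | rfl <;> norm_num)
    fun x y z w => by
      have hCx := hsum (C x) (C y) (C z) (C w)
      rw [Rcanon_precomp_eq_zero hBC, Rcanon_precomp_eq_zero hDC] at hCx
      rcases h2 with rfl | rfl <;> linarith
  refine ⟨by linarith, ?_, hBcube, hCcube⟩
  rcases h3 with rfl | rfl <;> linarith
end

section
/- Let R = εR_B + Σ_{i=1}^k ε_i R_{B_i} with ε, ε_i ∈ {−1,1}, where B has nontrivial kernel and each B_i is self- or skew-adjoint (canonical builds). Then for any linear operator A : V → V with Im(A) ⊆ ker(B), the precomposed tensor R̄ = A*R satisfies R̄ = Σ_{i=1}^k ε_i R_{A*B_iA}; moreover each R_{A*B_iA} is an algebraic curvature tensor of the same build as R_{B_i}. -/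
open RealInnerProductSpace

variable {V : Type*} [NormedAddCommGroup V] [InnerProductSpace ℝ V] [FiniteDimensional ℝ V]

lemma sym_of_self {C : V →ₗ[ℝ] V} (h : LinearMap.adjoint C = C) (u v : V) :
    ⟪C u, v⟫ = ⟪C v, u⟫ := by
  conv_lhs => rw [← h]
  rw [LinearMap.adjoint_inner_left, real_inner_comm]

lemma skew_of_skew {C : V →ₗ[ℝ] V} (h : LinearMap.adjoint C = -C) (u v : V) :
    ⟪C u, v⟫ = -⟪C v, u⟫ := by
  have := LinearMap.adjoint_inner_left C v u
  rw [h] at this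
  simp only [LinearMap.neg_apply, inner_neg_left] at this
  have h2 := real_inner_comm (C v) u
  linarith

lemma isACT_RS {C : V →ₗ[ℝ] V} (h : LinearMap.adjoint C = C) : IsACT (RS C) := by
  refine ⟨fun x y z w => by simp only [RS]; ring,
    fun x y z w => ?_, fun x y z w => ?_⟩
  · simp only [RS]
    rw [sym_of_self h z, sym_of_self h w x, sym_of_self h z x, sym_of_self h w y]
    ring
  · simp only [RS]
    rw [sym_of_self h z y, sym_of_self h y x, sym_of_self h z x]
    ring

lemma isACT_RL {C : V →ₗ[ℝ] V} (h : LinearMap.adjoint C = -C) : IsACT (RL C) := by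
  refine ⟨fun x y z w => by
      simp only [RL, RS]; rw [skew_of_skew h y x]; ring,
    fun x y z w => ?_, fun x y z w => ?_⟩
  · simp only [RL, RS]
    rw [skew_of_skew h z y, skew_of_skew h w x, skew_of_skew h z x, skew_of_skew h w y]
    ring
  · simp only [RL, RS]
    rw [skew_of_skew h z y, skew_of_skew h y x, skew_of_skew h z x]
    ring

lemma adjoint_conj (A C : V →ₗ[ℝ] V) :
    LinearMap.adjoint (LinearMap.adjoint A ∘ₗ C ∘ₗ A)
      = LinearMap.adjoint A ∘ₗ LinearMap.adjoint C ∘ₗ A := by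
  rw [LinearMap.adjoint_comp, LinearMap.adjoint_comp, LinearMap.adjoint_adjoint]
  rfl

lemma RS_pull (A C : V →ₗ[ℝ] V) (x y z w : V) :
    RS C (A x) (A y) (A z) (A w) = RS (LinearMap.adjoint A ∘ₗ C ∘ₗ A) x y z w := by
  simp only [RS, LinearMap.comp_apply, LinearMap.adjoint_inner_left]

lemma RL_pull (A C : V →ₗ[ℝ] V) (x y z w : V) :
    RL C (A x) (A y) (A z) (A w) = RL (LinearMap.adjoint A ∘ₗ C ∘ₗ A) x y z w := by
  simp only [RL, RS_pull, LinearMap.comp_apply, LinearMap.adjoint_inner_left]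

lemma RS_eq_RL_of_both {C : V →ₗ[ℝ] V} (h1 : LinearMap.adjoint C = C)
    (h2 : LinearMap.adjoint C = -C) : RS C = RL C := by
  have hC : C = 0 := by
    ext v
    have hv : C v = -(C v) := by
      conv_lhs => rw [← h1, h2]
      simp
    have h4 : (2:ℝ) • C v = 0 := by
      rw [two_smul]; nth_rewrite 1 [hv]; exact neg_add_cancel _
    simpa using (smul_eq_zero.mp h4).resolve_left (by norm_num)
  subst hC
  funext x y z w
  simp [RS, RL]

lemma Rcanon_pull (A C : V →ₗ[ℝ] V)
    (hC : LinearMap.adjoint C = C ∨ LinearMap.adjoint C = -C) (x y z w : V) :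
    Rcanon C (A x) (A y) (A z) (A w)
      = Rcanon (LinearMap.adjoint A ∘ₗ C ∘ₗ A) x y z w := by
  by_cases h' : LinearMap.adjoint C = C
  · have hc : LinearMap.adjoint (LinearMap.adjoint A ∘ₗ C ∘ₗ A)
        = LinearMap.adjoint A ∘ₗ C ∘ₗ A := by rw [adjoint_conj, h']
    simp only [Rcanon, if_pos h', if_pos hc, RS_pull]
  · have hskew : LinearMap.adjoint C = -C := hC.resolve_left h'
    have hc : LinearMap.adjoint (LinearMap.adjoint A ∘ₗ C ∘ₗ A)
        = -(LinearMap.adjoint A ∘ₗ C ∘ₗ A) := by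
      rw [adjoint_conj, hskew]; ext v; simp
    simp only [Rcanon, if_neg h']
    by_cases h2 : LinearMap.adjoint (LinearMap.adjoint A ∘ₗ C ∘ₗ A)
        = LinearMap.adjoint A ∘ₗ C ∘ₗ A
    · rw [if_pos h2, RS_eq_RL_of_both h2 hc]; exact RL_pull A C x y z w
    · rw [if_neg h2]; exact RL_pull A C x y z w

theorem stmt_16 (k : ℕ) (B : V →ₗ[ℝ] V) (Bs : Fin k → (V →ₗ[ℝ] V))
    (hB : LinearMap.adjoint B = B ∨ LinearMap.adjoint B = -B)
    (hBs : ∀ i, LinearMap.adjoint (Bs i) = Bs i ∨ LinearMap.adjoint (Bs i) = -(Bs i))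
    (hker : LinearMap.ker B ≠ ⊥)
    (ε : ℝ) (hε : ε = 1 ∨ ε = -1)
    (εs : Fin k → ℝ) (hεs : ∀ i, εs i = 1 ∨ εs i = -1)
    (R : V → V → V → V → ℝ)
    (hR : ∀ x y z w : V,
      R x y z w = ε * Rcanon B x y z w + ∑ i, εs i * Rcanon (Bs i) x y z w)
    (A : V →ₗ[ℝ] V) (hA : LinearMap.range A ≤ LinearMap.ker B) :
    (∀ x y z w : V,
      R (A x) (A y) (A z) (A w)
        = ∑ i, εs i * Rcanon (LinearMap.adjoint A ∘ₗ Bs i ∘ₗ A) x y z w) ∧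
    (∀ i, IsACT (Rcanon (LinearMap.adjoint A ∘ₗ Bs i ∘ₗ A)) ∧
      (LinearMap.adjoint (Bs i) = Bs i →
        LinearMap.adjoint (LinearMap.adjoint A ∘ₗ Bs i ∘ₗ A)
          = LinearMap.adjoint A ∘ₗ Bs i ∘ₗ A) ∧
      (LinearMap.adjoint (Bs i) = -(Bs i) →
        LinearMap.adjoint (LinearMap.adjoint A ∘ₗ Bs i ∘ₗ A)
          = -(LinearMap.adjoint A ∘ₗ Bs i ∘ₗ A))) := by
  have hA0 : ∀ u : V, B (A u) = 0 := fun u =>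
    LinearMap.mem_ker.mp (hA ⟨u, rfl⟩)
  constructor
  · intro x y z w
    rw [hR]
    have hB0 : Rcanon B (A x) (A y) (A z) (A w) = 0 := by
      unfold Rcanon
      split <;> simp [RS, RL, hA0]
    rw [hB0, mul_zero, zero_add]
    exact Finset.sum_congr rfl fun i _ => by
      rw [Rcanon_pull A (Bs i) (hBs i) x y z w]
  · intro i
    have hc : LinearMap.adjoint (LinearMap.adjoint A ∘ₗ Bs i ∘ₗ A)
        = LinearMap.adjoint A ∘ₗ LinearMap.adjoint (Bs i) ∘ₗ A := adjoint_conj A (Bs i)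
    refine ⟨?_, fun h => by rw [hc, h], fun h => by rw [hc, h]; ext v; simp⟩
    by_cases h2 : LinearMap.adjoint (LinearMap.adjoint A ∘ₗ Bs i ∘ₗ A)
        = LinearMap.adjoint A ∘ₗ Bs i ∘ₗ A
    · have := isACT_RS h2
      simpa only [Rcanon, if_pos h2] using this
    · have hskew : LinearMap.adjoint (Bs i) = -(Bs i) := by
        rcases hBs i with h | h
        · exact absurd (by rw [hc, h]) h2
        · exact h
      have hcs : LinearMap.adjoint (LinearMap.adjoint A ∘ₗ Bs i ∘ₗ A)
          = -(LinearMap.adjoint A ∘ₗ Bs i ∘ₗ A) := by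
        rw [hc, hskew]; ext v; simp
      have := isACT_RL hcs
      simpa only [Rcanon, if_neg h2] using this
end
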